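/- arXiv:1902.08952 — 8 statements merged into one kernel-verified Lean document; each statement's English description precedes it below -/
import Mathlib

section
/- Let φ: ℝ² → ℝ³, φ(s,t) = (t, γ¹(s,t), γ²(s,t)), be a smooth, proper, timelike immersion into (1+2)-Minkowski space, where γ = (γ¹,γ²): ℝ² → ℝ² satisfies ⟨γ_s, γ_t⟩ = 0, |γ_s|² + |γ_t|² = 1 and γ_tt − γ_ss = 0 everywhere (equivalently, φ is of this form with γ_s(s,t) ≠ 0 for all (s,t)). Define a_±(s) = γ_t(s,0) ± γ_s(s,0). Then a_+(ξ) ≠ a_-(η) for all ξ, η ∈ ℝ. -/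
/-!
Along null lines the wave equation γ_tt = γ_ss makes `γ_t + γ_s` constant in the direction
`(1, -1)` and `γ_t - γ_s` constant in the direction `(1, 1)`. Hence (d'Alembert)
`2 γ_s(s, t) = a₊(s + t) - a₋(s - t)`, so `a₊(ξ) = a₋(η)` would force `γ_s` to vanish at
`((ξ + η)/2, (ξ - η)/2)`.
-/

noncomputable section
open Real Set Filter
open scoped ContDiff

/-- The Minkowski bilinear form η on ℝ^{1+2} ≅ ℝ × ℝ × ℝ,
    η(x,y) = −x⁰y⁰ + x¹y¹ + x²y². -/
def eta (x y : ℝ × ℝ × ℝ) : ℝ := -(x.1 * y.1) + x.2.1 * y.2.1 + x.2.2 * y.2.2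

/-- Partial derivative of φ in the first (s) variable. -/
def pd1 (φ : ℝ × ℝ → ℝ × ℝ × ℝ) (p : ℝ × ℝ) : ℝ × ℝ × ℝ := fderiv ℝ φ p (1, 0)

/-- Partial derivative of φ in the second (t) variable. -/
def pd2 (φ : ℝ × ℝ → ℝ × ℝ × ℝ) (p : ℝ × ℝ) : ℝ × ℝ × ℝ := fderiv ℝ φ p (0, 1)

/-- Entry g₁₁ of the induced metric. -/
def gE (φ : ℝ × ℝ → ℝ × ℝ × ℝ) (p : ℝ × ℝ) : ℝ := eta (pd1 φ p) (pd1 φ p)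
/-- Entry g₁₂ = g₂₁ of the induced metric. -/
def gF (φ : ℝ × ℝ → ℝ × ℝ × ℝ) (p : ℝ × ℝ) : ℝ := eta (pd1 φ p) (pd2 φ p)
/-- Entry g₂₂ of the induced metric. -/
def gG (φ : ℝ × ℝ → ℝ × ℝ × ℝ) (p : ℝ × ℝ) : ℝ := eta (pd2 φ p) (pd2 φ p)

/-- Determinant of the induced metric. -/
def detg (φ : ℝ × ℝ → ℝ × ℝ × ℝ) (p : ℝ × ℝ) : ℝ := gE φ p * gG φ p - (gF φ p) ^ 2

/-- φ is timelike: det g < 0 everywhere. -/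
def Timelike (φ : ℝ × ℝ → ℝ × ℝ × ℝ) : Prop := ∀ p, detg φ p < 0

/-- φ is an immersion: dφ has rank 2 everywhere. -/
def ImmersionR2 (φ : ℝ × ℝ → ℝ × ℝ × ℝ) : Prop :=
  ∀ p, LinearIndependent ℝ ![pd1 φ p, pd2 φ p]

/-- Euclidean inner product on ℝ². -/
def dot2 (a b : ℝ × ℝ) : ℝ := a.1 * b.1 + a.2 * b.2

/-- Squared Euclidean norm on ℝ². -/
def nsq (a : ℝ × ℝ) : ℝ := dot2 a a

open ContinuousLinearMap

theorem apply_add_smul_eq_of_fderiv_apply_eq_zero {E F : Type*} [NormedAddCommGroup E]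
    [NormedSpace ℝ E] [NormedAddCommGroup F] [NormedSpace ℝ F] {f : E → F}
    (hf : Differentiable ℝ f) {d : E} (hd : ∀ p, fderiv ℝ f p d = 0) (p : E) (r : ℝ) :
    f (p + r • d) = f p := by
  have hderiv : ∀ x : ℝ, HasDerivAt (fun r : ℝ => f (p + r • d)) 0 x := by
    intro x
    have hline : HasDerivAt (fun r : ℝ => p + r • d) d x := by
      simpa using ((hasDerivAt_id x).smul_const d).const_add p
    have h := (hf (p + x • d)).hasFDerivAt.comp_hasDerivAt x hline
    rwa [hd] at h
  simpa using is_const_of_deriv_eq_zero (fun x => (hderiv x).differentiableAt)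
    (fun x => (hderiv x).deriv) r 0

section SecondDerivative

variable {F E : Type*} [NormedAddCommGroup F] [NormedSpace ℝ F] [NormedAddCommGroup E]
  [NormedSpace ℝ E] {f : F → E}

theorem hasFDerivAt_fderiv_apply (hf : ContDiff ℝ 2 f) (w p : F) :
    HasFDerivAt (fun q => fderiv ℝ f q w) ((fderiv ℝ (fderiv ℝ f) p).flip w) p := by
  have hD : Differentiable ℝ (fderiv ℝ f) :=
    (hf.fderiv_right (m := 1) le_rfl).differentiable one_ne_zero
  simpa using (hD p).hasFDerivAt.clm_apply (hasFDerivAt_const w p)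

theorem fderiv_fderiv_apply (hf : ContDiff ℝ 2 f) (w p v : F) :
    fderiv ℝ (fun q => fderiv ℝ f q w) p v = fderiv ℝ (fderiv ℝ f) p v w := by
  rw [(hasFDerivAt_fderiv_apply hf w p).fderiv, flip_apply]

theorem fderiv_fderiv_apply_comm (hf : ContDiff ℝ 2 f) (p v w : F) :
    fderiv ℝ (fderiv ℝ f) p v w = fderiv ℝ (fderiv ℝ f) p w v :=
  (hf.contDiffAt.isSymmSndFDerivAt (by simp [minSmoothness_of_isRCLikeNormedField])).eq v w

end SecondDerivative

section WaveEquation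

variable {E : Type*} [NormedAddCommGroup E] [NormedSpace ℝ E] {γ : ℝ × ℝ → E}

/-- `a₊(ξ) = nullPlus γ (ξ, 0)` and `a₋(η) = nullMinus γ (η, 0)`. -/
def nullPlus (γ : ℝ × ℝ → E) (p : ℝ × ℝ) : E := fderiv ℝ γ p (0, 1) + fderiv ℝ γ p (1, 0)

def nullMinus (γ : ℝ × ℝ → E) (p : ℝ × ℝ) : E := fderiv ℝ γ p (0, 1) - fderiv ℝ γ p (1, 0)

theorem hasFDerivAt_nullPlus (hγ : ContDiff ℝ 2 γ) (p : ℝ × ℝ) :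
    HasFDerivAt (nullPlus γ)
      ((fderiv ℝ (fderiv ℝ γ) p).flip (0, 1) + (fderiv ℝ (fderiv ℝ γ) p).flip (1, 0)) p :=
  (hasFDerivAt_fderiv_apply hγ _ p).add (hasFDerivAt_fderiv_apply hγ _ p)

theorem hasFDerivAt_nullMinus (hγ : ContDiff ℝ 2 γ) (p : ℝ × ℝ) :
    HasFDerivAt (nullMinus γ)
      ((fderiv ℝ (fderiv ℝ γ) p).flip (0, 1) - (fderiv ℝ (fderiv ℝ γ) p).flip (1, 0)) p :=
  (hasFDerivAt_fderiv_apply hγ _ p).sub (hasFDerivAt_fderiv_apply hγ _ p)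

variable (hγ : ContDiff ℝ 2 γ)
  (hwave : ∀ p, fderiv ℝ (fun q => fderiv ℝ γ q (0, 1)) p (0, 1) =
    fderiv ℝ (fun q => fderiv ℝ γ q (1, 0)) p (1, 0))
include hγ hwave

theorem fderiv_fderiv_apply_eq_of_wave (p : ℝ × ℝ) :
    fderiv ℝ (fderiv ℝ γ) p (0, 1) (0, 1) = fderiv ℝ (fderiv ℝ γ) p (1, 0) (1, 0) := by
  simpa only [fderiv_fderiv_apply hγ] using hwave p

theorem nullPlus_apply_add_smul (p : ℝ × ℝ) (r : ℝ) :
    nullPlus γ (p + r • (1, -1)) = nullPlus γ p := by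
  refine apply_add_smul_eq_of_fderiv_apply_eq_zero
    (fun q => (hasFDerivAt_nullPlus hγ q).differentiableAt) (fun q => ?_) p r
  have hdir : ((1 : ℝ), (-1 : ℝ)) = (1, 0) - (0, 1) := by norm_num
  rw [(hasFDerivAt_nullPlus hγ q).fderiv, add_apply, flip_apply, flip_apply, hdir, map_sub,
    sub_apply, sub_apply, fderiv_fderiv_apply_comm hγ q (1, 0) (0, 1),
    fderiv_fderiv_apply_eq_of_wave hγ hwave q]
  abel

theorem nullMinus_apply_add_smul (p : ℝ × ℝ) (r : ℝ) :
    nullMinus γ (p + r • (1, 1)) = nullMinus γ p := by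
  refine apply_add_smul_eq_of_fderiv_apply_eq_zero
    (fun q => (hasFDerivAt_nullMinus hγ q).differentiableAt) (fun q => ?_) p r
  have hdir : ((1 : ℝ), (1 : ℝ)) = (1, 0) + (0, 1) := by norm_num
  rw [(hasFDerivAt_nullMinus hγ q).fderiv, sub_apply, flip_apply, flip_apply, hdir, map_add,
    add_apply, add_apply, fderiv_fderiv_apply_comm hγ q (1, 0) (0, 1),
    fderiv_fderiv_apply_eq_of_wave hγ hwave q]
  abel

theorem two_smul_fderiv_apply_eq_nullPlus_sub_nullMinus (s t : ℝ) :
    (2 : ℝ) • fderiv ℝ γ (s, t) (1, 0) = nullPlus γ (s + t, 0) - nullMinus γ (s - t, 0) := by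
  have hplus := nullPlus_apply_add_smul hγ hwave (s + t, 0) (-t)
  have hminus := nullMinus_apply_add_smul hγ hwave (s - t, 0) t
  have hpt : ((s + t, 0) : ℝ × ℝ) + (-t) • ((1 : ℝ), (-1 : ℝ)) = (s, t) := by
    ext <;> simp
  have hmt : ((s - t, 0) : ℝ × ℝ) + t • ((1 : ℝ), (1 : ℝ)) = (s, t) := by
    ext <;> simp
  rw [← hplus, ← hminus, hpt, hmt, nullPlus, nullMinus, two_smul]
  abel

end WaveEquation

theorem null_directions_disjoint_general
    (γ : ℝ × ℝ → ℝ × ℝ)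
    (hsmooth : ContDiff ℝ ∞ γ)
    (himm : ∀ p : ℝ × ℝ, fderiv ℝ γ p (1, 0) ≠ 0)
    (hwave : ∀ p : ℝ × ℝ,
      fderiv ℝ (fun q => fderiv ℝ γ q (0, 1)) p (0, 1) -
      fderiv ℝ (fun q => fderiv ℝ γ q (1, 0)) p (1, 0) = 0) :
    ∀ ξ η : ℝ,
      fderiv ℝ γ (ξ, 0) (0, 1) + fderiv ℝ γ (ξ, 0) (1, 0) ≠
      fderiv ℝ γ (η, 0) (0, 1) - fderiv ℝ γ (η, 0) (1, 0) := by
  intro ξ η hnull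
  have hγ : ContDiff ℝ 2 γ := hsmooth.of_le (WithTop.coe_le_coe.mpr le_top)
  have hdAlembert := two_smul_fderiv_apply_eq_nullPlus_sub_nullMinus hγ
    (fun p => sub_eq_zero.mp (hwave p)) ((ξ + η) / 2) ((ξ - η) / 2)
  rw [show (ξ + η) / 2 + (ξ - η) / 2 = ξ by ring, show (ξ + η) / 2 - (ξ - η) / 2 = η by ring,
    nullPlus, nullMinus, hnull, sub_self, smul_eq_zero] at hdAlembert
  exact hdAlembert.elim two_ne_zero (himm _)

/-- For a smooth proper timelike immersion in isothermal gauge,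
the images of the outgoing and incoming null directions along the initial curve
are disjoint: a_+(ξ) ≠ a_-(η) for all ξ, η. -/
theorem null_directions_disjoint
    (γ : ℝ × ℝ → ℝ × ℝ)
    (φ : ℝ × ℝ → ℝ × ℝ × ℝ)
    (hform : ∀ p : ℝ × ℝ, φ p = (p.2, γ p))
    (hsmooth : ContDiff ℝ ∞ γ)
    (hproper : IsProperMap φ)
    (htimelike : Timelike φ)
    (himm : ∀ p : ℝ × ℝ, fderiv ℝ γ p (1, 0) ≠ 0)
    (horth : ∀ p : ℝ × ℝ, dot2 (fderiv ℝ γ p (1, 0)) (fderiv ℝ γ p (0, 1)) = 0)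
    (hnorm : ∀ p : ℝ × ℝ, nsq (fderiv ℝ γ p (1, 0)) + nsq (fderiv ℝ γ p (0, 1)) = 1)
    (hwave : ∀ p : ℝ × ℝ,
      fderiv ℝ (fun q => fderiv ℝ γ q (0, 1)) p (0, 1) -
      fderiv ℝ (fun q => fderiv ℝ γ q (1, 0)) p (1, 0) = 0) :
    ∀ ξ η : ℝ,
      fderiv ℝ γ (ξ, 0) (0, 1) + fderiv ℝ γ (ξ, 0) (1, 0) ≠
      fderiv ℝ γ (η, 0) (0, 1) - fderiv ℝ γ (η, 0) (1, 0) :=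
  null_directions_disjoint_general γ hsmooth himm hwave
end
end

section
/- Let M > 0 and let a_+, a_-: [−M,M] → ℝ² be smooth functions satisfying |a_+(s)| = |a_-(s)| = 1 for all s and a_+(ξ) ≠ a_-(η) for all ξ, η ∈ [−M,M]. Then there exists ω ∈ ℝ² with |ω| = 1 such that ⟨a_+(ξ) − a_-(η), ω⟩ > 0 for all ξ, η ∈ [−M,M]. -/
/-!
Lift both curves to continuous angle functions `α`, `β` (the exponential `ℝ → S¹` is a covering
map). Disjointness keeps `α ξ - β η` off `2πℤ`, and these differences form a connected set, so
after shifting `β` by a multiple of `2π` they all lie in `(0, 2π)`. If `α` ranges over `[p, q]` and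
`β` over `[r, s]`, compactness gives `0 < p - s` and `q - r < 2π`; then `ω = (-sin φ, cos φ)` with
`φ = (p + q + r + s) / 4` works, because
`⟨(cos a, sin a) - (cos b, sin b), ω⟩ = 2 sin ((a - b) / 2) cos ((a + b) / 2 - φ)`
and both factors are positive.
-/

noncomputable section
open Real Set
open scoped ContDiff

lemma exists_continuous_angle_lift {a b : ℝ} (hab : a ≤ b) {f : ℝ → ℝ × ℝ}
    (hf : ContinuousOn f (Icc a b)) (hunit : ∀ s ∈ Icc a b, dot2 (f s) (f s) = 1) :
    ∃ θ : ℝ → ℝ, Continuous θ ∧ ∀ s ∈ Icc a b, f s = (cos (θ s), sin (θ s)) := by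
  have hmem (s : Icc a b) : Complex.equivRealProd.symm (f s) ∈ Metric.sphere (0 : ℂ) 1 := by
    have := hunit s s.2
    rw [mem_sphere_zero_iff_norm, Complex.norm_def, Real.sqrt_eq_one]
    simpa [Complex.normSq_apply, dot2] using this
  let z : C(ℝ, Circle) :=
    ⟨fun t ↦ ⟨_, hmem (projIcc a b hab t)⟩,
      ((Complex.equivRealProdCLM.symm.continuous.comp_continuousOn hf).comp_continuous
        (continuous_subtype_val.comp continuous_projIcc) fun t ↦ (projIcc a b hab t).2).subtype_mk _⟩
  obtain ⟨θ₀, hθ₀⟩ := Circle.exp_surjective (z 0)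
  obtain ⟨θ, ⟨-, hθ⟩, -⟩ := Circle.isCoveringMap_exp.existsUnique_continuousMap_lifts z 0 θ₀ hθ₀
  refine ⟨θ, θ.continuous, fun s hs ↦ ?_⟩
  have hz : Complex.exp (θ s * Complex.I) = Complex.equivRealProd.symm (f s) := by
    have h := congrArg Subtype.val (congrFun hθ s)
    change (Circle.exp (θ s) : ℂ) = Complex.equivRealProd.symm (f (projIcc a b hab s)) at h
    rwa [projIcc_of_mem hab hs, Circle.coe_exp] at h
  ext
  · simpa [Complex.exp_ofReal_mul_I_re] using (congrArg Complex.re hz).symm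
  · simpa [Complex.exp_ofReal_mul_I_im] using (congrArg Complex.im hz).symm

lemma IsPreconnected.exists_subset_Ioo_int_mul {S : Set ℝ} (hS : IsPreconnected S)
    (hS₀ : S.Nonempty) {T : ℝ} (hT : 0 < T) (hSZ : ∀ x ∈ S, ∀ m : ℤ, x ≠ m * T) :
    ∃ k : ℤ, S ⊆ Ioo (k * T) ((k + 1) * T) := by
  obtain ⟨c, hc⟩ := hS₀
  refine ⟨⌊c / T⌋, fun x hx ↦ ⟨?_, ?_⟩⟩ <;> by_contra! hxk
  · have hck : ⌊c / T⌋ * T ≤ c := by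
      rw [← le_div_iff₀ hT]; exact Int.floor_le _
    exact hSZ _ (hS.ordConnected.out hx hc ⟨hxk, hck⟩) _ rfl
  · have hck : c ≤ (⌊c / T⌋ + 1) * T := by
      rw [← div_le_iff₀ hT]; exact (Int.lt_floor_add_one _).le
    exact hSZ _ (hS.ordConnected.out hc hx ⟨hck, hxk⟩) (⌊c / T⌋ + 1) (by push_cast; ring)

lemma dot2_cos_sin_sub (a b φ : ℝ) :
    dot2 ((cos a, sin a) - (cos b, sin b)) (-sin φ, cos φ) =
      2 * sin ((a - b) / 2) * cos ((a + b) / 2 - φ) := by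
  simp only [dot2, Prod.fst_sub, Prod.snd_sub]
  rw [cos_sub_cos, sin_sub_sin, cos_sub]
  ring

lemma exists_direction_separating_angles {A B : Set ℝ} (hA : IsCompact A) (hA₀ : A.Nonempty)
    (hB : IsCompact B) (hB₀ : B.Nonempty) (hAB : ∀ a ∈ A, ∀ b ∈ B, a - b ∈ Ioo 0 (2 * π)) :
    ∃ φ : ℝ, ∀ a ∈ A, ∀ b ∈ B, 0 < dot2 ((cos a, sin a) - (cos b, sin b)) (-sin φ, cos φ) := by
  obtain ⟨p, hpA, hp⟩ := hA.exists_isLeast hA₀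
  obtain ⟨q, hqA, hq⟩ := hA.exists_isGreatest hA₀
  obtain ⟨r, hrB, hr⟩ := hB.exists_isLeast hB₀
  obtain ⟨s, hsB, hs⟩ := hB.exists_isGreatest hB₀
  have hps := (hAB p hpA s hsB).1
  have hqr := (hAB q hqA r hrB).2
  refine ⟨(p + q + r + s) / 4, fun a ha b hb ↦ ?_⟩
  have hpa : p ≤ a := hp ha
  have haq : a ≤ q := hq ha
  have hrb : r ≤ b := hr hb
  have hbs : b ≤ s := hs hb
  rw [dot2_cos_sin_sub]
  have hsin : 0 < sin ((a - b) / 2) := sin_pos_of_pos_of_lt_pi (by linarith) (by linarith)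
  have hcos : 0 < cos ((a + b) / 2 - (p + q + r + s) / 4) :=
    cos_pos_of_mem_Ioo ⟨by linarith, by linarith⟩
  positivity

/-- If a_± : [−M,M] → S¹ are smooth with disjoint images, then some
unit vector ω strictly separates them: ⟨a_+(ξ) − a_-(η), ω⟩ > 0 for all ξ, η. -/
theorem separating_direction_for_disjoint_circle_arcs
    (M : ℝ) (hM : 0 < M) (aP aM : ℝ → ℝ × ℝ)
    (hPsmooth : ContDiffOn ℝ ∞ aP (Set.Icc (-M) M))
    (hMsmooth : ContDiffOn ℝ ∞ aM (Set.Icc (-M) M))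
    (hPunit : ∀ s ∈ Set.Icc (-M) M, dot2 (aP s) (aP s) = 1)
    (hMunit : ∀ s ∈ Set.Icc (-M) M, dot2 (aM s) (aM s) = 1)
    (hne : ∀ ξ ∈ Set.Icc (-M) M, ∀ η ∈ Set.Icc (-M) M, aP ξ ≠ aM η) :
    ∃ w : ℝ × ℝ, dot2 w w = 1 ∧
      ∀ ξ ∈ Set.Icc (-M) M, ∀ η ∈ Set.Icc (-M) M, 0 < dot2 (aP ξ - aM η) w := by
  set K := Icc (-M) M
  have hK : K.Nonempty := nonempty_Icc.2 (by linarith)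
  obtain ⟨α, hα, hαP⟩ := exists_continuous_angle_lift (by linarith) hPsmooth.continuousOn hPunit
  obtain ⟨β, hβ, hβM⟩ := exists_continuous_angle_lift (by linarith) hMsmooth.continuousOn hMunit
  have hgap : ∀ ξ ∈ K, ∀ η ∈ K, ∀ m : ℤ, α ξ - β η ≠ m * (2 * π) := by
    intro ξ hξ η hη m hm
    refine hne ξ hξ η hη ?_
    rw [hαP ξ hξ, hβM η hη, show α ξ = β η + m * (2 * π) by linarith,
      cos_add_int_mul_two_pi, sin_add_int_mul_two_pi]
  obtain ⟨k, hk⟩ := ((isPreconnected_Icc.prod isPreconnected_Icc).image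
      (fun x ↦ α x.1 - β x.2) (by fun_prop)).exists_subset_Ioo_int_mul
    ((hK.prod hK).image _) two_pi_pos (by rintro _ ⟨⟨ξ, η⟩, ⟨hξ, hη⟩, rfl⟩; exact hgap ξ hξ η hη)
  obtain ⟨φ, hφ⟩ := exists_direction_separating_angles (isCompact_Icc.image hα) (hK.image α)
    (isCompact_Icc.image (f := (β · + k * (2 * π))) (by fun_prop)) (hK.image _) <| by
      rintro _ ⟨ξ, hξ, rfl⟩ _ ⟨η, hη, rfl⟩
      obtain ⟨hlo, hhi⟩ := hk (mem_image_of_mem (fun x ↦ α x.1 - β x.2) (mk_mem_prod hξ hη))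
      exact ⟨by linarith, by linarith⟩
  refine ⟨(-sin φ, cos φ), by simp [dot2, ← sq], ?_⟩
  intro ξ hξ η hη
  rw [hαP ξ hξ, hβM η hη, ← cos_add_int_mul_two_pi (β η) k, ← sin_add_int_mul_two_pi (β η) k]
  exact hφ _ (mem_image_of_mem _ hξ) _ (mem_image_of_mem _ hη)
end
end

section
/- Let Ω ⊆ ℝ² be an open bounded set such that, for some (s₀,t₀) ∈ ℝ² and ε > 0, {s₀} × [t₀−ε, t₀) ⊆ Ω and (s₀,t₀) ∈ ∂Ω. Let φ: cl(Ω) → ℝ³ be a C¹ map of the form φ(s,t) = (t, γ(s,t)) with γ: cl(Ω) → ℝ², such that φ restricted to Ω is a C² timelike immersion, and such that ⟨γ_s(s₀,t), γ_t(s₀,t)⟩ = 0 and 0 < |γ_t(s₀,t)| < 1 for all t ∈ [t₀−ε, t₀), while |γ_t(s₀,t₀)| = 1. Define n(s₀,t) = γ_t(s₀,t)/|γ_t(s₀,t)|, the cross-sectional curvature k(s₀,t) = ⟨γ_ss(s₀,t), n(s₀,t)⟩ / |γ_s(s₀,t)|², and the mean curvature scalar h(s₀,t) = −⟨γ_ss(s₀,t),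 n(s₀,t)⟩ / ( |γ_s(s₀,t)|² (1−|γ_t(s₀,t)|²)^{1/2} ) + ⟨γ_tt(s₀,t), n(s₀,t)⟩ / (1−|γ_t(s₀,t)|²)^{3/2}. If there is a constant C with |h(s₀,t)| ≤ C for all t ∈ [t₀−ε, t₀), then ∫_{t₀−ε}^{t₀} |k(s₀,t)| dt = ∞; in particular limsup_{t ↗ t₀} |k(s₀,t)| = ∞. -/
/-!
Along the line `s = s₀` the rapidity `artanh |γ_t|` tends to `+∞` as `t ↗ t₀`, since `γ_t` is
continuous up to the boundary and `|γ_t| = 1` there. Its `t`-derivative is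
`⟨γ_tt, n⟩ / (1 - |γ_t|²) = √(1 - |γ_t|²) h + k`, which is bounded by `C + |k|`. A function
tending to infinity cannot have a derivative dominated by an integrable function, so `k` is
not integrable on any interval `(a, t₀)`, and in particular `|k|` is unbounded near `t₀`.
-/

noncomputable section
open Real Set Filter MeasureTheory
open scoped ENNReal ContDiff

/-- γ_s. -/
def gs (γ : ℝ × ℝ → ℝ × ℝ) (p : ℝ × ℝ) : ℝ × ℝ := fderiv ℝ γ p (1, 0)
/-- γ_t. -/
def gt (γ : ℝ × ℝ → ℝ × ℝ) (p : ℝ × ℝ) : ℝ × ℝ := fderiv ℝ γ p (0, 1)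
/-- γ_ss. -/
def gss (γ : ℝ × ℝ → ℝ × ℝ) (p : ℝ × ℝ) : ℝ × ℝ :=
  fderiv ℝ (fun q => fderiv ℝ γ q (1, 0)) p (1, 0)
/-- γ_tt. -/
def gtt (γ : ℝ × ℝ → ℝ × ℝ) (p : ℝ × ℝ) : ℝ × ℝ :=
  fderiv ℝ (fun q => fderiv ℝ γ q (0, 1)) p (0, 1)

/-- The unit vector n = γ_t/|γ_t|. -/
def nvec (γ : ℝ × ℝ → ℝ × ℝ) (p : ℝ × ℝ) : ℝ × ℝ :=
  (Real.sqrt (nsq (gt γ p)))⁻¹ • gt γ p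

/-- Cross-sectional curvature k(s₀,t) = ⟨γ_ss, n⟩/|γ_s|². -/
def crossK (γ : ℝ × ℝ → ℝ × ℝ) (s₀ t : ℝ) : ℝ :=
  dot2 (gss γ (s₀, t)) (nvec γ (s₀, t)) / nsq (gs γ (s₀, t))

/-- Mean curvature scalar
h = −⟨γ_ss,n⟩/(|γ_s|²(1−|γ_t|²)^{1/2}) + ⟨γ_tt,n⟩/(1−|γ_t|²)^{3/2}. -/
def hScal (γ : ℝ × ℝ → ℝ × ℝ) (s₀ t : ℝ) : ℝ :=
  -(dot2 (gss γ (s₀, t)) (nvec γ (s₀, t))) /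
      (nsq (gs γ (s₀, t)) * Real.sqrt (1 - nsq (gt γ (s₀, t)))) +
    dot2 (gtt γ (s₀, t)) (nvec γ (s₀, t)) /
      (Real.sqrt (1 - nsq (gt γ (s₀, t)))) ^ 3

open Topology

theorem hasDerivAt_artanh {x : ℝ} (hx : x ∈ Ioo (-1) 1) :
    HasDerivAt artanh (1 - x ^ 2)⁻¹ x := by
  have h1 : 0 < 1 + x := by linarith [hx.1]
  have h2 : 0 < 1 - x := by linarith [hx.2]
  have heq : (fun y => 1 / 2 * log ((1 + y) / (1 - y))) =ᶠ[𝓝 x] artanh := by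
    filter_upwards [Icc_mem_nhds hx.1 hx.2] with y hy using (artanh_eq_half_log hy).symm
  have hratio : HasDerivAt (fun y => (1 + y) / (1 - y))
      ((1 * (1 - x) - (1 + x) * (-1)) / (1 - x) ^ 2) x :=
    ((hasDerivAt_id x).const_add 1).div ((hasDerivAt_id x).const_sub 1) h2.ne'
  refine (((hratio.log (div_pos h1 h2).ne').const_mul (1 / 2)).congr_of_eventuallyEq
    heq.symm).congr_deriv ?_
  have h3 : 1 - x ^ 2 ≠ 0 := by nlinarith
  field_simp
  ring

theorem tendsto_artanh_nhdsLT_one : Tendsto artanh (𝓝[<] 1) atTop := by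
  have hsub : Tendsto (fun x : ℝ => 1 - x) (𝓝[<] 1) (𝓝[>] 0) := by
    refine tendsto_nhdsWithin_iff.2 ⟨?_, ?_⟩
    · exact ((continuous_const.sub continuous_id).tendsto' 1 0 (sub_self 1)).mono_left
        nhdsWithin_le_nhds
    · filter_upwards [self_mem_nhdsWithin] with x hx using sub_pos.2 (mem_Iio.1 hx)
  have hadd : Tendsto (fun x : ℝ => 1 + x) (𝓝[<] 1) (𝓝 2) :=
    ((continuous_const.add continuous_id).tendsto' 1 2 (by norm_num)).mono_left
      nhdsWithin_le_nhds
  have hratio : Tendsto (fun x : ℝ => (1 + x) / (1 - x)) (𝓝[<] 1) atTop :=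
    hadd.pos_mul_atTop two_pos (tendsto_inv_nhdsGT_zero.comp hsub)
  exact tendsto_log_atTop.comp (tendsto_sqrt_atTop.comp hratio)

theorem not_integrableOn_Ioo_of_tendsto_atTop_of_abs_deriv_le {f f' g : ℝ → ℝ} {a b C : ℝ}
    (hab : a < b) (hf : ∀ᶠ t in 𝓝[<] b, HasDerivAt f (f' t) t)
    (hf' : ∀ᶠ t in 𝓝[<] b, |f' t| ≤ C + |g t|) (htop : Tendsto f (𝓝[<] b) atTop) :
    ¬ IntegrableOn g (Ioo a b) := by
  intro hg
  refine not_integrableOn_of_tendsto_norm_atTop_of_deriv_isBigO_filter (𝓝[<] b)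
    (Ioo_mem_nhdsLT hab) (hf.mono fun t ht => ht.differentiableAt)
    (tendsto_abs_atTop_atTop.comp htop) (g := fun t => C + |g t|) ?_
    ((integrableOn_const measure_Ioo_lt_top.ne).add hg.abs)
  refine Asymptotics.IsBigO.of_bound' ?_
  filter_upwards [hf, hf'] with t hderiv hle
  rw [hderiv.deriv, Real.norm_eq_abs, Real.norm_eq_abs]
  exact hle.trans (le_abs_self _)

theorem frequently_lt_norm_of_forall_not_integrableOn_Ioo {E : Type*} [NormedAddCommGroup E]
    {g : ℝ → E} {b : ℝ} (hg : AEStronglyMeasurable g)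
    (h : ∀ a < b, ¬ IntegrableOn g (Ioo a b)) (C : ℝ) : ∃ᶠ t in 𝓝[<] b, C < ‖g t‖ := by
  intro hle
  obtain ⟨a, ha, hsub⟩ := mem_nhdsLT_iff_exists_Ioo_subset.1 (hle.mono fun t ht => not_lt.1 ht)
  exact h a ha (Measure.integrableOn_of_bounded measure_Ioo_lt_top.ne hg
    ((ae_restrict_mem measurableSet_Ioo).mono fun t ht => hsub ht))

theorem setLIntegral_ofReal_norm_eq_top {E : Type*} [NormedAddCommGroup E] {g : ℝ → E} {s : Set ℝ}
    (hg : AEStronglyMeasurable g) (h : ¬ IntegrableOn g s) :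
    ∫⁻ t in s, ENNReal.ofReal ‖g t‖ = ⊤ := by
  by_contra hne
  exact h ⟨hg.restrict, (hasFiniteIntegral_iff_norm g).2 (lt_top_iff_ne_top.2 hne)⟩

theorem exists_hasFDerivWithinAt_tendsto_fderiv {𝕜 E F : Type*} [NontriviallyNormedField 𝕜]
    [NormedAddCommGroup E] [NormedSpace 𝕜 E] [NormedAddCommGroup F] [NormedSpace 𝕜 F]
    {f : E → F} {s t : Set E} {x : E} (hs : IsOpen s) (hst : s ⊆ t) (hx : x ∈ t)
    (hf : ContDiffWithinAt 𝕜 1 f t x) :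
    ∃ L, HasFDerivWithinAt f L t x ∧ Tendsto (fderiv 𝕜 f) (𝓝[s] x) (𝓝 L) := by
  rw [← zero_add (1 : WithTop ℕ∞), contDiffWithinAt_succ_iff_hasFDerivWithinAt' (by simp)] at hf
  obtain ⟨u, hu, -, -, f', hf', hf'c⟩ := hf
  rw [insert_eq_of_mem hx] at hu
  have hloc : 𝓝[s] x ≤ 𝓝[t] x := nhdsWithin_mono x hst
  refine ⟨f' x, hf' x (mem_of_mem_nhdsWithin hx hu), ?_⟩
  refine (hf'c.continuousWithinAt.tendsto.mono_left hloc).congr' ?_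
  filter_upwards [hloc hu, self_mem_nhdsWithin] with y hyu hys
  exact ((hf' y hyu).hasFDerivAt (mem_of_superset (hs.mem_nhds hys) hst)).fderiv.symm

theorem HasFDerivWithinAt.apply_eq_fderivWithin_of_openSegment_subset {E F : Type*}
    [NormedAddCommGroup E] [NormedSpace ℝ E] [NormedAddCommGroup F] [NormedSpace ℝ F]
    {f : E → F} {L : E →L[ℝ] F} {s : Set E} {x v : E} {c : ℝ} (hL : HasFDerivWithinAt f L s x)
    (hf : DifferentiableWithinAt ℝ f s x) (hc : c ≠ 0) (hseg : openSegment ℝ x (x + c • v) ⊆ s) :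
    L v = fderivWithin ℝ f s x v := by
  have hcone : c • v ∈ tangentConeAt ℝ s x := by
    simpa using mem_tangentConeAt_of_openSegment_subset hseg
  have := hL.unique_on hf.hasFDerivWithinAt hcone
  rw [map_smul, map_smul] at this
  exact smul_right_injective F hc this

theorem continuous_nsq : Continuous nsq := by
  unfold nsq dot2
  fun_prop

theorem hasDerivAt_sqrt_nsq {v : ℝ → ℝ × ℝ} {v' : ℝ × ℝ} {t : ℝ} (hv : HasDerivAt v v' t)
    (h0 : 0 < nsq (v t)) :
    HasDerivAt (fun τ => √(nsq (v τ))) (dot2 v' ((√(nsq (v t)))⁻¹ • v t)) t := by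
  have hnsq : HasDerivAt (fun τ => nsq (v τ)) (2 * dot2 v' (v t)) t := by
    have h1 := (hasFDerivAt_fst.comp_hasDerivAt t hv)
    have h2 := (hasFDerivAt_snd.comp_hasDerivAt t hv)
    refine ((h1.mul h1).add (h2.mul h2)).congr_deriv ?_
    simp only [dot2, Function.comp_apply, ContinuousLinearMap.coe_fst',
      ContinuousLinearMap.coe_snd']
    ring
  refine (hnsq.sqrt h0.ne').congr_deriv ?_
  have hs : √(nsq (v t)) ≠ 0 := (Real.sqrt_pos.2 h0).ne'
  simp only [dot2, Prod.smul_fst, Prod.smul_snd, smul_eq_mul]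
  field_simp

theorem hasDerivAt_gt_comp_mk {γ : ℝ × ℝ → ℝ × ℝ} {s₀ t : ℝ} (hγ : ContDiffAt ℝ 2 γ (s₀, t)) :
    HasDerivAt (fun τ => gt γ (s₀, τ)) (gtt γ (s₀, t)) t := by
  have hγ' : DifferentiableAt ℝ (fun q => fderiv ℝ γ q (0, 1)) (s₀, t) :=
    ((hγ.fderiv_right (by norm_num)).differentiableAt one_ne_zero).clm_apply
      (differentiableAt_const _)
  exact hγ'.hasFDerivAt.comp_hasDerivAt t ((hasDerivAt_const t s₀).prodMk (hasDerivAt_id t))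

theorem dot2_gtt_nvec_div_eq {γ : ℝ × ℝ → ℝ × ℝ} {s₀ t : ℝ} (hq : nsq (gt γ (s₀, t)) < 1) :
    dot2 (gtt γ (s₀, t)) (nvec γ (s₀, t)) / (1 - nsq (gt γ (s₀, t))) =
      √(1 - nsq (gt γ (s₀, t))) * hScal γ s₀ t + crossK γ s₀ t := by
  rw [hScal, crossK]
  set q := nsq (gt γ (s₀, t))
  set v := √(1 - q)
  have hv0 : v ≠ 0 := (Real.sqrt_pos.2 (sub_pos.2 hq)).ne'
  have hv2 : 1 - q = v ^ 2 := (Real.sq_sqrt (sub_pos.2 hq).le).symm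
  rw [hv2]
  field_simp
  ring

def rapidity (γ : ℝ × ℝ → ℝ × ℝ) (s₀ t : ℝ) : ℝ := artanh √(nsq (gt γ (s₀, t)))

theorem hasDerivAt_rapidity {γ : ℝ × ℝ → ℝ × ℝ} {s₀ t : ℝ} (hγ : ContDiffAt ℝ 2 γ (s₀, t))
    (hq0 : 0 < nsq (gt γ (s₀, t))) (hq1 : nsq (gt γ (s₀, t)) < 1) :
    HasDerivAt (rapidity γ s₀)
      (√(1 - nsq (gt γ (s₀, t))) * hScal γ s₀ t + crossK γ s₀ t) t := by
  have hw : √(nsq (gt γ (s₀, t))) ∈ Ioo (-1) 1 :=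
    ⟨by linarith [Real.sqrt_nonneg (nsq (gt γ (s₀, t)))],
      (Real.sqrt_lt' one_pos).2 (by rwa [one_pow])⟩
  refine ((hasDerivAt_artanh hw).comp t
    (hasDerivAt_sqrt_nsq (hasDerivAt_gt_comp_mk hγ) hq0)).congr_deriv ?_
  rw [Real.sq_sqrt hq0.le, ← dot2_gtt_nvec_div_eq hq1, inv_mul_eq_div]
  rfl

theorem tendsto_gt_nhdsLT {Ω : Set (ℝ × ℝ)} {γ : ℝ × ℝ → ℝ × ℝ} {s₀ t₀ ε : ℝ} (hopen : IsOpen Ω)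
    (hε : 0 < ε) (hseg : {s₀} ×ˢ Ico (t₀ - ε) t₀ ⊆ Ω) (hx : (s₀, t₀) ∈ closure Ω)
    (hγ : ContDiffWithinAt ℝ 1 γ (closure Ω) (s₀, t₀)) :
    Tendsto (fun t => gt γ (s₀, t)) (𝓝[<] t₀)
      (𝓝 (fderivWithin ℝ γ (closure Ω) (s₀, t₀) (0, 1))) := by
  obtain ⟨L, hL, hlim⟩ := exists_hasFDerivWithinAt_tendsto_fderiv hopen subset_closure hx hγ
  have hsegment : openSegment ℝ (s₀, t₀) ((s₀, t₀) + (-ε) • ((0 : ℝ), (1 : ℝ))) ⊆ closure Ω := by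
    have hend : (s₀, t₀) + (-ε) • ((0 : ℝ), (1 : ℝ)) = (s₀, t₀ - ε) := by
      simp [sub_eq_add_neg]
    rw [hend, ← Prod.image_mk_openSegment_right, openSegment_symm,
      openSegment_eq_Ioo (by linarith)]
    rintro _ ⟨τ, hτ, rfl⟩
    exact subset_closure (hseg ⟨rfl, hτ.1.le, hτ.2⟩)
  have hmk : Tendsto (fun t => (s₀, t)) (𝓝[<] t₀) (𝓝[Ω] (s₀, t₀)) := by
    refine tendsto_nhdsWithin_iff.2 ⟨?_, ?_⟩
    · exact ((continuous_const.prodMk continuous_id).tendsto t₀).mono_left nhdsWithin_le_nhds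
    · filter_upwards [Ico_mem_nhdsLT (by linarith : t₀ - ε < t₀)] with t ht using hseg ⟨rfl, ht⟩
  rw [← hL.apply_eq_fderivWithin_of_openSegment_subset (hγ.differentiableWithinAt one_ne_zero)
    (neg_ne_zero.2 hε.ne') hsegment]
  exact ((continuous_id.clm_apply continuous_const).tendsto L).comp (hlim.comp hmk)

theorem measurable_crossK (γ : ℝ × ℝ → ℝ × ℝ) (s₀ : ℝ) : Measurable (crossK γ s₀) := by
  have hmk : Measurable fun t : ℝ => (s₀, t) := measurable_const.prodMk measurable_id
  have hgs := (measurable_fderiv_apply_const ℝ γ ((1 : ℝ), (0 : ℝ))).comp hmk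
  have hgt := (measurable_fderiv_apply_const ℝ γ ((0 : ℝ), (1 : ℝ))).comp hmk
  have hgss := (measurable_fderiv_apply_const ℝ (fun q => fderiv ℝ γ q (1, 0))
    ((1 : ℝ), (0 : ℝ))).comp hmk
  unfold crossK nvec nsq dot2 gss gs gt
  fun_prop

theorem abs_sqrt_one_sub_mul_add_le {q h k C : ℝ} (hq : 0 ≤ q) (hh : |h| ≤ C) :
    |√(1 - q) * h + k| ≤ C + |k| := by
  have hv : √(1 - q) ≤ 1 := Real.sqrt_le_one.2 (by linarith)
  calc |√(1 - q) * h + k| ≤ |√(1 - q) * h| + |k| := abs_add_le _ _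
    _ = √(1 - q) * |h| + |k| := by rw [abs_mul, abs_of_nonneg (Real.sqrt_nonneg _)]
    _ ≤ 1 * C + |k| := by gcongr
    _ = C + |k| := by rw [one_mul]

theorem curvature_integral_blow_up_general
    (Ω : Set (ℝ × ℝ)) (hopen : IsOpen Ω)
    (s₀ t₀ ε : ℝ) (hε : 0 < ε)
    (hseg : {s₀} ×ˢ Set.Ico (t₀ - ε) t₀ ⊆ Ω)
    (hfront : (s₀, t₀) ∈ frontier Ω)
    (γ : ℝ × ℝ → ℝ × ℝ)
    (hC1 : ContDiffOn ℝ 1 γ (closure Ω))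
    (hC2 : ContDiffOn ℝ 2 γ Ω)
    (hpos : ∀ t ∈ Set.Ico (t₀ - ε) t₀,
      0 < nsq (gt γ (s₀, t)) ∧ nsq (gt γ (s₀, t)) < 1)
    (hnull : nsq (fderivWithin ℝ γ (closure Ω) (s₀, t₀) (0, 1)) = 1)
    (C : ℝ) (hbound : ∀ t ∈ Set.Ico (t₀ - ε) t₀, |hScal γ s₀ t| ≤ C) :
    (∫⁻ t in Set.Ico (t₀ - ε) t₀, ENNReal.ofReal |crossK γ s₀ t| = ⊤) ∧
    ∀ C' : ℝ, ∃ᶠ t in nhdsWithin t₀ (Set.Iio t₀), C' < |crossK γ s₀ t| := by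
  have hx₀ : (s₀, t₀) ∈ closure Ω := frontier_subset_closure hfront
  have hnear : ∀ᶠ t in 𝓝[<] t₀, t ∈ Ico (t₀ - ε) t₀ := Ico_mem_nhdsLT (by linarith)
  have hspeed : Tendsto (fun t => √(nsq (gt γ (s₀, t)))) (𝓝[<] t₀) (𝓝[<] 1) := by
    have hq := (continuous_nsq.tendsto _).comp (tendsto_gt_nhdsLT hopen hε hseg hx₀ (hC1 _ hx₀))
    rw [hnull] at hq
    refine tendsto_nhdsWithin_iff.2 ⟨?_, ?_⟩
    · simpa only [Function.comp_def, Real.sqrt_one] using (Real.continuous_sqrt.tendsto 1).comp hq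
    · filter_upwards [hnear] with t ht
      exact (Real.sqrt_lt' one_pos).2 (by rw [one_pow]; exact (hpos t ht).2)
  have hK : ∀ a < t₀, ¬ IntegrableOn (crossK γ s₀) (Ioo a t₀) := fun a ha =>
    not_integrableOn_Ioo_of_tendsto_atTop_of_abs_deriv_le ha
      (hnear.mono fun t ht => hasDerivAt_rapidity
        (hC2.contDiffAt (hopen.mem_nhds (hseg ⟨rfl, ht⟩))) (hpos t ht).1 (hpos t ht).2)
      (hnear.mono fun t ht => abs_sqrt_one_sub_mul_add_le (hpos t ht).1.le (hbound t ht))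
      (tendsto_artanh_nhdsLT_one.comp hspeed)
  have hmeas : AEStronglyMeasurable (crossK γ s₀) := (measurable_crossK γ s₀).aestronglyMeasurable
  constructor
  · simpa only [Real.norm_eq_abs] using setLIntegral_ofReal_norm_eq_top hmeas
      fun h => hK (t₀ - ε) (by linarith) (h.mono_set Ioo_subset_Ico_self)
  · simpa only [Real.norm_eq_abs] using frequently_lt_norm_of_forall_not_integrableOn_Ioo hmeas hK

/-- If an orthogonally-parameterised timelike evolution with bounded
mean curvature degenerates (|γ_t(s₀,t₀)| = 1) at a boundary point, then the
cross-sectional curvature along s = s₀ has infinite time-integral, and in particular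
blows up as t ↗ t₀. -/
theorem curvature_integral_blow_up
    (Ω : Set (ℝ × ℝ)) (hopen : IsOpen Ω) (hbdd : Bornology.IsBounded Ω)
    (s₀ t₀ ε : ℝ) (hε : 0 < ε)
    (hseg : {s₀} ×ˢ Set.Ico (t₀ - ε) t₀ ⊆ Ω)
    (hfront : (s₀, t₀) ∈ frontier Ω)
    (γ : ℝ × ℝ → ℝ × ℝ)
    (hC1 : ContDiffOn ℝ 1 γ (closure Ω))
    (hC2 : ContDiffOn ℝ 2 γ Ω)
    (himm : ∀ p ∈ Ω, gs γ p ≠ 0)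
    (htimelike : ∀ p ∈ Ω,
      nsq (gs γ p) * (nsq (gt γ p) - 1) - (dot2 (gs γ p) (gt γ p)) ^ 2 < 0)
    (horth : ∀ t ∈ Set.Ico (t₀ - ε) t₀, dot2 (gs γ (s₀, t)) (gt γ (s₀, t)) = 0)
    (hpos : ∀ t ∈ Set.Ico (t₀ - ε) t₀,
      0 < nsq (gt γ (s₀, t)) ∧ nsq (gt γ (s₀, t)) < 1)
    (hnull : nsq (fderivWithin ℝ γ (closure Ω) (s₀, t₀) (0, 1)) = 1)
    (C : ℝ) (hbound : ∀ t ∈ Set.Ico (t₀ - ε) t₀, |hScal γ s₀ t| ≤ C) :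
    (∫⁻ t in Set.Ico (t₀ - ε) t₀, ENNReal.ofReal |crossK γ s₀ t| = ⊤) ∧
    ∀ C' : ℝ, ∃ᶠ t in nhdsWithin t₀ (Set.Iio t₀), C' < |crossK γ s₀ t| :=
  curvature_integral_blow_up_general Ω hopen s₀ t₀ ε hε hseg hfront γ hC1 hC2 hpos hnull C hbound
end
end

section
/- Let γ: ℝ² → ℝ² be the evolution by isothermal gauge of C¹ × C⁰ initial data (c,v), and suppose c is proper, i.e. |c(s)| → ∞ as s → ±∞. Then for every t ∈ ℝ, |γ(s,t)| → ∞ as s → ±∞; hence each map γ(·,t): ℝ → ℝ² is proper, and φ(s,t) = (t, γ(s,t)) is a proper map ℝ² → ℝ³. -/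
noncomputable section
open Real Set Filter MeasureTheory
open scoped ContDiff ENNReal

/-- Euclidean norm on ℝ². -/
def enorm2 (a : ℝ × ℝ) : ℝ := Real.sqrt (nsq a)

/-- d'Alembert's formula: the evolution by isothermal gauge of initial data (c,v),
γ(s,t) = (1/2)(c(s+t) + c(s−t) + ∫_{s−t}^{s+t} v). -/
def gammaIG (c v : ℝ → ℝ × ℝ) (p : ℝ × ℝ) : ℝ × ℝ :=
  (1 / 2 : ℝ) • (c (p.1 + p.2) + c (p.1 - p.2) + ∫ ζ in (p.1 - p.2)..(p.1 + p.2), v ζ)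

/-- Partial derivative in s of a map ℝ² → ℝ². -/
def pds (γ : ℝ × ℝ → ℝ × ℝ) (p : ℝ × ℝ) : ℝ × ℝ := deriv (fun x => γ (x, p.2)) p.1
/-- Partial derivative in t of a map ℝ² → ℝ². -/
def pdt (γ : ℝ × ℝ → ℝ × ℝ) (p : ℝ × ℝ) : ℝ × ℝ := deriv (fun y => γ (p.1, y)) p.2

/-- Spatial direction a₊ = v + ċ of the outgoing null tangent. -/
def aplus (c v : ℝ → ℝ × ℝ) (s : ℝ) : ℝ × ℝ := v s + deriv c s
/-- Spatial direction a₋ = v − ċ of the incoming null tangent. -/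
def aminus (c v : ℝ → ℝ × ℝ) (s : ℝ) : ℝ × ℝ := v s - deriv c s

/-- The characteristic diamond D(s₁,s₂) = {(s,t) : s₁ + |t| ≤ s ≤ s₂ − |t|}. -/
def diamond (s₁ s₂ : ℝ) : Set (ℝ × ℝ) :=
  {p : ℝ × ℝ | s₁ + |p.2| ≤ p.1 ∧ p.1 ≤ s₂ - |p.2|}

/-- Admissible C¹ × C⁰ initial data for the isothermal gauge:
⟨ċ,v⟩ = 0, |ċ|² + |v|² = 1 and |v| < 1. -/
structure IGData (c v : ℝ → ℝ × ℝ) : Prop where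
  hc : ContDiff ℝ 1 c
  hv : Continuous v
  horth : ∀ s, dot2 (deriv c s) (v s) = 0
  hnorm : ∀ s, nsq (deriv c s) + nsq (v s) = 1
  hvlt : ∀ s, nsq (v s) < 1

/-- ϑ is a continuous lift of the unit tangent U₀ = ċ/|ċ| along c. -/
def IsTangentLift (c : ℝ → ℝ × ℝ) (ϑ : ℝ → ℝ) : Prop :=
  Continuous ϑ ∧
    ∀ s, (enorm2 (deriv c s))⁻¹ • deriv c s = ((Real.cos (ϑ s), Real.sin (ϑ s)) : ℝ × ℝ)

/-! The difference γ(s,t) − c(s) consists of two chords of c of length at most |t| and an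
integral of v over an interval of length 2|t|; since |ċ| ≤ 1 and |v| ≤ 1 it has norm at most
2|t|. Hence |γ(s,t)| ≥ |c(s)| − O(|t|), which forces |γ(s,t)| → ∞ as |s| → ∞ locally uniformly
in t, and properness of the sections and of φ follows. -/

/-- Mathlib's norm on `ℝ × ℝ` is the sup norm; the Euclidean `enorm2` is the modulus in `ℂ`. -/
lemma enorm2_eq_norm_complex (a : ℝ × ℝ) : enorm2 a = ‖Complex.equivRealProdCLM.symm a‖ := by
  rw [Complex.norm_def, Complex.equivRealProdCLM_symm_apply, Complex.normSq_add_mul_I,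
    enorm2, nsq, dot2, sq, sq]

lemma enorm2_sub_enorm2_le (a b : ℝ × ℝ) : enorm2 a - enorm2 b ≤ enorm2 (a - b) := by
  simpa only [enorm2_eq_norm_complex, map_sub] using norm_sub_norm_le _ _

lemma norm_le_enorm2 (a : ℝ × ℝ) : ‖a‖ ≤ enorm2 a := by
  rw [enorm2_eq_norm_complex, Prod.norm_def, Real.norm_eq_abs, Real.norm_eq_abs]
  refine max_le ?_ ?_
  · simpa using Complex.abs_re_le_norm (Complex.equivRealProdCLM.symm a)
  · simpa using Complex.abs_im_le_norm (Complex.equivRealProdCLM.symm a)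

lemma enorm2_le_two_mul_norm (a : ℝ × ℝ) : enorm2 a ≤ 2 * ‖a‖ := by
  rw [enorm2_eq_norm_complex]
  calc _ ≤ |a.1| + |a.2| := by
        simpa [Complex.equivRealProdCLM_symm_apply] using
          Complex.norm_le_abs_re_add_abs_im (Complex.equivRealProdCLM.symm a)
    _ ≤ ‖a‖ + ‖a‖ := add_le_add (norm_fst_le a) (norm_snd_le a)
    _ = 2 * ‖a‖ := by ring

lemma nsq_nonneg (a : ℝ × ℝ) : 0 ≤ nsq a :=
  add_nonneg (mul_self_nonneg _) (mul_self_nonneg _)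

lemma norm_le_one_of_nsq_le_one {a : ℝ × ℝ} (h : nsq a ≤ 1) : ‖a‖ ≤ 1 :=
  (norm_le_enorm2 a).trans (Real.sqrt_le_one.mpr h)

lemma tendsto_norm_atTop_of_enorm2 {α : Type*} {l : Filter α} {f : α → ℝ × ℝ}
    (h : Tendsto (fun x => enorm2 (f x)) l atTop) : Tendsto (fun x => ‖f x‖) l atTop :=
  tendsto_atTop_mono (fun x => by linarith [enorm2_le_two_mul_norm (f x)])
    (h.atTop_div_const two_pos)

lemma isProperMap_of_tendsto_norm_cocompact {X E : Type*} [TopologicalSpace X]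
    [NormedAddCommGroup E] [ProperSpace E] {f : X → E} (hf : Continuous f)
    (h : Tendsto (fun x => ‖f x‖) (cocompact X) atTop) : IsProperMap f := by
  rw [isProperMap_iff_tendsto_cocompact, ← Metric.cobounded_eq_cocompact, ← comap_norm_atTop]
  exact ⟨hf, tendsto_comap_iff.mpr h⟩

lemma continuous_gammaIG {c v : ℝ → ℝ × ℝ} (hc : Continuous c) (hv : Continuous v) :
    Continuous (gammaIG c v) := by
  set F : ℝ → ℝ × ℝ := fun b => ∫ ζ in (0 : ℝ)..b, v ζ
  have hF : Continuous F := intervalIntegral.continuous_primitive (hv.intervalIntegrable) 0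
  have hγ : gammaIG c v = fun p => (1 / 2 : ℝ) •
      (c (p.1 + p.2) + c (p.1 - p.2) + (F (p.1 + p.2) - F (p.1 - p.2))) := by
    ext1 p
    rw [gammaIG, intervalIntegral.integral_interval_sub_left (hv.intervalIntegrable _ _)
      (hv.intervalIntegrable _ _)]
  rw [hγ]
  fun_prop

lemma norm_gammaIG_sub_le {c v : ℝ → ℝ × ℝ} (hc : LipschitzWith 1 c) (hv : ∀ s, ‖v s‖ ≤ 1)
    (s t : ℝ) : ‖gammaIG c v (s, t) - c s‖ ≤ 2 * |t| := by
  have hchord : ∀ a, ‖c a - c s‖ ≤ |a - s| := fun a => by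
    simpa [Real.norm_eq_abs] using hc.norm_sub_le a s
  have hplus : ‖c (s + t) - c s‖ ≤ |t| := by simpa using hchord (s + t)
  have hminus : ‖c (s - t) - c s‖ ≤ |t| := by simpa using hchord (s - t)
  have hint : ‖∫ ζ in (s - t)..(s + t), v ζ‖ ≤ 2 * |t| := by
    have := intervalIntegral.norm_integral_le_of_norm_le_const (a := s - t) (b := s + t)
      fun x _ => hv x
    rwa [one_mul, show s + t - (s - t) = 2 * t by ring, abs_mul, abs_two] at this
  have hsplit : gammaIG c v (s, t) - c s = (1 / 2 : ℝ) •
      ((c (s + t) - c s) + (c (s - t) - c s) + ∫ ζ in (s - t)..(s + t), v ζ) := by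
    simp only [gammaIG]
    module
  rw [hsplit, norm_smul, Real.norm_of_nonneg (by norm_num)]
  linarith [norm_add₃_le (a := c (s + t) - c s) (b := c (s - t) - c s)
    (c := ∫ ζ in (s - t)..(s + t), v ζ)]

namespace IGData

variable {c v : ℝ → ℝ × ℝ} (hdata : IGData c v)
include hdata

lemma norm_le_one (s : ℝ) : ‖v s‖ ≤ 1 :=
  norm_le_one_of_nsq_le_one (hdata.hvlt s).le

lemma lipschitzWith_one : LipschitzWith 1 c := by
  refine lipschitzWith_of_nnnorm_deriv_le (hdata.hc.differentiable one_ne_zero) fun s => ?_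
  have h : ‖deriv c s‖ ≤ 1 :=
    norm_le_one_of_nsq_le_one (by linarith [hdata.hnorm s, nsq_nonneg (v s)])
  exact_mod_cast h

lemma enorm2_sub_le_enorm2_gammaIG (s t : ℝ) :
    enorm2 (c s) - 4 * |t| ≤ enorm2 (gammaIG c v (s, t)) := by
  have hclose : enorm2 (c s - gammaIG c v (s, t)) ≤ 4 * |t| := by
    have := norm_gammaIG_sub_le hdata.lipschitzWith_one hdata.norm_le_one s t
    rw [norm_sub_rev] at this
    linarith [enorm2_le_two_mul_norm (c s - gammaIG c v (s, t))]
  linarith [enorm2_sub_enorm2_le (c s) (gammaIG c v (s, t))]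

lemma tendsto_enorm2_gammaIG (hcproper : Tendsto (fun s => enorm2 (c s)) (cocompact ℝ) atTop)
    (t : ℝ) : Tendsto (fun s => enorm2 (gammaIG c v (s, t))) (cocompact ℝ) atTop :=
  tendsto_atTop_mono (fun s => by linarith [hdata.enorm2_sub_le_enorm2_gammaIG s t])
    (tendsto_atTop_add_const_right _ (-(4 * |t|)) hcproper)

/-- Near infinity in ℝ², either |s| is large, and then |c(s)| ≤ 6 |(t, γ(s,t))|, or |t| is. -/
lemma tendsto_norm_graph (hcproper : Tendsto (fun s => enorm2 (c s)) (cocompact ℝ) atTop) :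
    Tendsto (fun p : ℝ × ℝ => ‖((p.2, gammaIG c v p) : ℝ × ℝ × ℝ)‖) (cocompact (ℝ × ℝ))
      atTop := by
  rw [← coprod_cocompact]
  refine tendsto_sup.mpr ⟨tendsto_atTop_mono (fun p => ?_)
    ((hcproper.comp tendsto_comap).atTop_div_const (by norm_num : (0 : ℝ) < 6)),
    tendsto_atTop_mono (fun p => norm_fst_le ((p.2, gammaIG c v p) : ℝ × ℝ × ℝ))
      (tendsto_norm_cocompact_atTop.comp tendsto_comap)⟩
  have ht := norm_fst_le ((p.2, gammaIG c v p) : ℝ × ℝ × ℝ)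
  have hγ := norm_snd_le ((p.2, gammaIG c v p) : ℝ × ℝ × ℝ)
  have := hdata.enorm2_sub_le_enorm2_gammaIG p.1 p.2
  simp only [Real.norm_eq_abs, Prod.mk.eta, Function.comp_apply] at ht hγ this ⊢
  linarith [enorm2_le_two_mul_norm (gammaIG c v p)]

end IGData

/-- If the initial curve c is proper, then every cross-section
γ(·,t) of the evolution by isothermal gauge is proper, and φ(s,t) = (t,γ(s,t))
is a proper map. -/
theorem isothermal_evolution_is_proper
    (c v : ℝ → ℝ × ℝ) (hdata : IGData c v)
    (hcproper : Tendsto (fun s => enorm2 (c s)) atTop atTop ∧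
      Tendsto (fun s => enorm2 (c s)) atBot atTop) :
    (∀ t : ℝ, Tendsto (fun s => enorm2 (gammaIG c v (s, t))) atTop atTop ∧
      Tendsto (fun s => enorm2 (gammaIG c v (s, t))) atBot atTop) ∧
    (∀ t : ℝ, IsProperMap (fun s => gammaIG c v (s, t))) ∧
    IsProperMap (fun p : ℝ × ℝ => ((p.2, gammaIG c v p) : ℝ × ℝ × ℝ)) := by
  have hc : Tendsto (fun s => enorm2 (c s)) (cocompact ℝ) atTop := by
    rw [cocompact_eq_atBot_atTop]
    exact tendsto_sup.mpr hcproper.symm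
  have hγ : Continuous (gammaIG c v) := continuous_gammaIG hdata.hc.continuous hdata.hv
  refine ⟨fun t => ⟨?_, ?_⟩, fun t => ?_, ?_⟩
  · exact (hdata.tendsto_enorm2_gammaIG hc t).mono_left atTop_le_cocompact
  · exact (hdata.tendsto_enorm2_gammaIG hc t).mono_left atBot_le_cocompact
  · exact isProperMap_of_tendsto_norm_cocompact (by fun_prop)
      (tendsto_norm_atTop_of_enorm2 (hdata.tendsto_enorm2_gammaIG hc t))
  · exact isProperMap_of_tendsto_norm_cocompact (by fun_prop) (hdata.tendsto_norm_graph hc)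
end
end

section
/- Let γ: ℝ² → ℝ² be the evolution by isothermal gauge of C¹ × C⁰ initial data (c,v), with ϑ a continuous lift of the unit tangent U₀ along c. Suppose there exist s₁ < s₂ with |ϑ(s₂) − ϑ(s₁)| ≥ π (i.e., the image of U₀ contains a closed semi-circle). Then there exist ξ, η ∈ [s₁,s₂] with a_+(ξ) = a_-(η); equivalently, the singular set K_sing = {(s,t) : γ_s(s,t) = 0} intersects the characteristic diamond D(s₁,s₂). -/
noncomputable section
open Real Set Filter MeasureTheory
open scoped ContDiff ENNReal

/-!
With `e = unitVec`, write `ċ = r • e ϑ` and `v = ρ • e (ϑ + π/2)`, where `r² + ρ² = 1` and `r ≥ 0`.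
For `φ = arcsin ρ` the null directions are `a₊ = e (ϑ + φ)` and `a₋ = e (ϑ - φ + π)`. Along the
symmetric pairs `(u, s₁ + s₂ - u)` the angle difference `(ϑ + φ)(u) - (ϑ - φ)(s₁ + s₂ - u)` changes by
`2 (ϑ s₂ - ϑ s₁)`, at least `2π` in absolute value, so by the intermediate value theorem it hits `π`
modulo `2π`. That is a collision `a₊ ξ = a₋ η`, and `γ_s = (a₊(s + t) - a₋(s - t))/2` vanishes at
`((ξ + η)/2, (ξ - η)/2)`, a point of the diamond.
-/

def unitVec (θ : ℝ) : ℝ × ℝ := (cos θ, sin θ)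

lemma unitVec_add_int_mul_two_pi (θ : ℝ) (k : ℤ) :
    unitVec (θ + k * (2 * π)) = unitVec θ := by
  simp only [unitVec, cos_add_int_mul_two_pi, sin_add_int_mul_two_pi]

lemma unitVec_add_pi_div_two (θ : ℝ) : unitVec (θ + π / 2) = (-sin θ, cos θ) := by
  simp only [unitVec, cos_add_pi_div_two, sin_add_pi_div_two]

lemma unitVec_ne_zero (θ : ℝ) : unitVec θ ≠ 0 := by
  intro h
  have hcos : cos θ = 0 := congrArg Prod.fst h
  have hsin : sin θ = 0 := congrArg Prod.snd h
  simpa [hcos, hsin] using sin_sq_add_cos_sq θ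

lemma cos_smul_unitVec_add_sin_smul (θ φ : ℝ) :
    cos φ • unitVec θ + sin φ • unitVec (θ + π / 2) = unitVec (θ + φ) := by
  rw [unitVec_add_pi_div_two]
  ext <;> simp only [unitVec, Prod.fst_add, Prod.snd_add, Prod.smul_fst, Prod.smul_snd,
    smul_eq_mul, cos_add, sin_add] <;> ring

lemma sin_smul_unitVec_sub_cos_smul (θ φ : ℝ) :
    sin φ • unitVec (θ + π / 2) - cos φ • unitVec θ = unitVec (θ - φ + π) := by
  rw [unitVec_add_pi_div_two]
  ext <;> simp only [unitVec, Prod.fst_sub, Prod.snd_sub, Prod.smul_fst, Prod.smul_snd,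
    smul_eq_mul, cos_add_pi, sin_add_pi, cos_sub, sin_sub] <;> ring

lemma dot2_smul_left (a : ℝ) (x y : ℝ × ℝ) : dot2 (a • x) y = a * dot2 x y := by
  simp only [dot2, Prod.smul_fst, Prod.smul_snd, smul_eq_mul]
  ring

lemma nsq_smul_unitVec (a θ : ℝ) : nsq (a • unitVec θ) = a ^ 2 := by
  simp only [nsq, dot2, unitVec, Prod.smul_mk, smul_eq_mul]
  linear_combination a ^ 2 * cos_sq_add_sin_sq θ

lemma eq_smul_unitVec_add_pi_div_two_of_dot2_eq_zero {θ : ℝ} {w : ℝ × ℝ}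
    (h : dot2 (unitVec θ) w = 0) :
    w = dot2 (unitVec (θ + π / 2)) w • unitVec (θ + π / 2) := by
  rw [unitVec_add_pi_div_two]
  simp only [dot2, unitVec] at h
  ext <;> simp only [dot2, Prod.smul_mk, smul_eq_mul]
  · linear_combination (-w.1) * sin_sq_add_cos_sq θ + cos θ * h
  · linear_combination (-w.2) * sin_sq_add_cos_sq θ + sin θ * h

lemma enorm2_ne_zero_of_inv_smul_eq_unitVec {w : ℝ × ℝ} {θ : ℝ}
    (h : (enorm2 w)⁻¹ • w = unitVec θ) : enorm2 w ≠ 0 := by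
  intro h0
  rw [h0, inv_zero, zero_smul] at h
  exact unitVec_ne_zero θ h.symm

lemma eq_enorm2_smul_of_inv_smul_eq_unitVec {w : ℝ × ℝ} {θ : ℝ}
    (h : (enorm2 w)⁻¹ • w = unitVec θ) : w = enorm2 w • unitVec θ := by
  rw [← h, smul_smul, mul_inv_cancel₀ (enorm2_ne_zero_of_inv_smul_eq_unitVec h), one_smul]

lemma cos_arcsin_eq_of_sq_add_sq_eq_one {r ρ : ℝ} (hr : 0 ≤ r) (h : r ^ 2 + ρ ^ 2 = 1) :
    cos (arcsin ρ) = r := by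
  rw [cos_arcsin, show 1 - ρ ^ 2 = r ^ 2 by linarith, sqrt_sq hr]

lemma sin_arcsin_eq_of_sq_add_sq_eq_one {r ρ : ℝ} (h : r ^ 2 + ρ ^ 2 = 1) :
    sin (arcsin ρ) = ρ :=
  sin_arcsin (by nlinarith [sq_nonneg r, sq_nonneg (ρ + 1)])
    (by nlinarith [sq_nonneg r, sq_nonneg (ρ - 1)])

lemma exists_continuous_aplus_aminus_eq_unitVec {c v : ℝ → ℝ × ℝ} {ϑ : ℝ → ℝ}
    (hv : Continuous v) (horth : ∀ s, dot2 (deriv c s) (v s) = 0)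
    (hnorm : ∀ s, nsq (deriv c s) + nsq (v s) = 1) (hlift : IsTangentLift c ϑ) :
    ∃ φ : ℝ → ℝ, Continuous φ ∧ ∀ s,
      aplus c v s = unitVec (ϑ s + φ s) ∧ aminus c v s = unitVec (ϑ s - φ s + π) := by
  obtain ⟨hϑ, hdir⟩ := hlift
  set ρ : ℝ → ℝ := fun s => dot2 (unitVec (ϑ s + π / 2)) (v s) with hρ
  refine ⟨fun s => arcsin (ρ s), continuous_arcsin.comp ?_, fun s => ?_⟩
  · simp only [hρ, dot2, unitVec]
    fun_prop
  obtain ⟨r, hr0, hr, hċ⟩ : ∃ r : ℝ, 0 ≤ r ∧ r ≠ 0 ∧ deriv c s = r • unitVec (ϑ s) :=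
    ⟨_, sqrt_nonneg _, enorm2_ne_zero_of_inv_smul_eq_unitVec (hdir s),
      eq_enorm2_smul_of_inv_smul_eq_unitVec (hdir s)⟩
  have hvs : v s = ρ s • unitVec (ϑ s + π / 2) := by
    refine eq_smul_unitVec_add_pi_div_two_of_dot2_eq_zero ?_
    have := horth s
    rwa [hċ, dot2_smul_left, mul_eq_zero, or_iff_right hr] at this
  have hsq : r ^ 2 + ρ s ^ 2 = 1 := by
    simpa only [hċ, hvs, nsq_smul_unitVec] using hnorm s
  have hcos := cos_arcsin_eq_of_sq_add_sq_eq_one hr0 hsq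
  have hsin := sin_arcsin_eq_of_sq_add_sq_eq_one hsq
  have hplus := cos_smul_unitVec_add_sin_smul (ϑ s) (arcsin (ρ s))
  have hminus := sin_smul_unitVec_sub_cos_smul (ϑ s) (arcsin (ρ s))
  rw [hcos, hsin] at hplus hminus
  rw [aplus, aminus, hvs, hċ, add_comm]
  exact ⟨hplus, hminus⟩

lemma exists_mem_Icc_eq_add_int_mul_two_pi {f : ℝ → ℝ} {a b : ℝ} (hab : a ≤ b)
    (hf : ContinuousOn f (Icc a b)) (hfab : 2 * π ≤ |f b - f a|) (x : ℝ) :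
    ∃ u ∈ Icc a b, ∃ k : ℤ, f u = x + k * (2 * π) := by
  set m := min (f a) (f b)
  have hy : toIcoMod two_pi_pos m x ∈ uIcc (f a) (f b) := by
    obtain ⟨hm, hmp⟩ := toIcoMod_mem_Ico two_pi_pos m x
    have := max_sub_min_eq_abs (f a) (f b)
    exact ⟨hm, by linarith⟩
  rw [← uIcc_of_le hab] at hf ⊢
  obtain ⟨u, hu, hfu⟩ := intermediate_value_uIcc hf hy
  refine ⟨u, hu, -toIcoDiv two_pi_pos m x, ?_⟩
  rw [hfu, toIcoMod, zsmul_eq_mul, Int.cast_neg]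
  ring

lemma exists_aplus_eq_aminus_of_pi_le {c v : ℝ → ℝ × ℝ} {ϑ : ℝ → ℝ}
    (hv : Continuous v) (horth : ∀ s, dot2 (deriv c s) (v s) = 0)
    (hnorm : ∀ s, nsq (deriv c s) + nsq (v s) = 1) (hlift : IsTangentLift c ϑ)
    {s₁ s₂ : ℝ} (hle : s₁ ≤ s₂) (harc : π ≤ |ϑ s₂ - ϑ s₁|) :
    ∃ ξ ∈ Icc s₁ s₂, ∃ η ∈ Icc s₁ s₂, aplus c v ξ = aminus c v η := by
  obtain ⟨φ, hφ, hnull⟩ := exists_continuous_aplus_aminus_eq_unitVec hv horth hnorm hlift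
  set f : ℝ → ℝ := fun u => ϑ u + φ u - (ϑ (s₁ + s₂ - u) - φ (s₁ + s₂ - u)) with hf
  have hfc : Continuous f := by
    have := hlift.1
    fun_prop
  have hfab : 2 * π ≤ |f s₂ - f s₁| := by
    have : f s₂ - f s₁ = 2 * (ϑ s₂ - ϑ s₁) := by
      simp only [hf, add_sub_cancel_right, add_sub_cancel_left]
      ring
    rw [this, abs_mul, abs_two]
    linarith
  obtain ⟨ξ, hξ, k, hk⟩ := exists_mem_Icc_eq_add_int_mul_two_pi hle hfc.continuousOn hfab π
  refine ⟨ξ, hξ, s₁ + s₂ - ξ, ⟨by linarith [hξ.2], by linarith [hξ.1]⟩, ?_⟩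
  have hangle : ϑ ξ + φ ξ = ϑ (s₁ + s₂ - ξ) - φ (s₁ + s₂ - ξ) + π + k * (2 * π) := by
    simp only [hf] at hk
    linarith
  rw [(hnull _).1, (hnull _).2, hangle, unitVec_add_int_mul_two_pi]

lemma hasDerivAt_intervalIntegral_sub_add {v : ℝ → ℝ × ℝ} (hv : Continuous v) (x t : ℝ) :
    HasDerivAt (fun y => ∫ ζ in (y - t)..(y + t), v ζ) (v (x + t) - v (x - t)) x := by
  have hprim : ∀ y, HasDerivAt (fun u => ∫ ζ in (0 : ℝ)..u, v ζ) (v y) y := fun y =>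
    (hv.integral_hasStrictDerivAt 0 y).hasDerivAt
  have hsplit : (fun y => ∫ ζ in (y - t)..(y + t), v ζ) =
      fun y => (∫ ζ in (0 : ℝ)..(y + t), v ζ) - ∫ ζ in (0 : ℝ)..(y - t), v ζ := by
    funext y
    exact (intervalIntegral.integral_interval_sub_left (hv.intervalIntegrable _ _)
      (hv.intervalIntegrable _ _)).symm
  rw [hsplit]
  exact ((hprim _).comp_add_const x t).sub ((hprim _).comp_sub_const x t)

lemma pds_gammaIG {c v : ℝ → ℝ × ℝ} (hc : Differentiable ℝ c) (hv : Continuous v) (s t : ℝ) :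
    pds (gammaIG c v) (s, t) = (1 / 2 : ℝ) • (aplus c v (s + t) - aminus c v (s - t)) := by
  have hderiv : HasDerivAt (fun x => gammaIG c v (x, t))
      ((1 / 2 : ℝ) • (deriv c (s + t) + deriv c (s - t) + (v (s + t) - v (s - t)))) s :=
    ((((hc _).hasDerivAt.comp_add_const s t).add ((hc _).hasDerivAt.comp_sub_const s t)).add
      (hasDerivAt_intervalIntegral_sub_add hv s t)).const_smul (1 / 2 : ℝ)
  rw [pds, hderiv.deriv, aplus, aminus]
  congr 1
  abel

lemma mk_half_add_half_sub_mem_diamond {s₁ s₂ ξ η : ℝ} (hξ : ξ ∈ Icc s₁ s₂)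
    (hη : η ∈ Icc s₁ s₂) : ((ξ + η) / 2, (ξ - η) / 2) ∈ diamond s₁ s₂ := by
  obtain ⟨hξ₁, hξ₂⟩ := hξ
  obtain ⟨hη₁, hη₂⟩ := hη
  constructor <;> rcases abs_cases ((ξ - η) / 2) with ⟨h, -⟩ | ⟨h, -⟩ <;> simp only [h] <;>
    linarith

/-- If the unit tangent of the initial curve sweeps a closed
semi-circle on [s₁,s₂], then the null directions collide: a₊(ξ) = a₋(η) for some
ξ, η ∈ [s₁,s₂]; equivalently the singular set {γ_s = 0} meets the characteristic
diamond D(s₁,s₂). -/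
theorem singular_set_nonempty_of_semicircle
    (c v : ℝ → ℝ × ℝ) (hdata : IGData c v)
    (ϑ : ℝ → ℝ) (hlift : IsTangentLift c ϑ)
    (s₁ s₂ : ℝ) (hlt : s₁ < s₂) (harc : |ϑ s₂ - ϑ s₁| ≥ π) :
    (∃ ξ ∈ Set.Icc s₁ s₂, ∃ η ∈ Set.Icc s₁ s₂, aplus c v ξ = aminus c v η) ∧
    ∃ p ∈ diamond s₁ s₂, pds (gammaIG c v) p = 0 := by
  obtain ⟨ξ, hξ, η, hη, hcol⟩ :=
    exists_aplus_eq_aminus_of_pi_le hdata.hv hdata.horth hdata.hnorm hlift hlt.le harc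
  refine ⟨⟨ξ, hξ, η, hη, hcol⟩, _, mk_half_add_half_sub_mem_diamond hξ hη, ?_⟩
  rw [pds_gammaIG (hdata.hc.differentiable one_ne_zero) hdata.hv,
    show (ξ + η) / 2 + (ξ - η) / 2 = ξ by ring, show (ξ + η) / 2 - (ξ - η) / 2 = η by ring,
    hcol, sub_self, smul_zero]
end
end

section
/- Let c: ℝ → ℝ² be a C¹ immersion (ċ(s) ≠ 0 for all s) with a point of self-intersection: c(r₁) = c(r₂) for some r₁ < r₂. Let ϑ: ℝ → ℝ be a continuous lift of the unit tangent, i.e. ċ(s)/|ċ(s)| = (cos ϑ(s), sin ϑ(s)). Then there exist s₁, s₂ ∈ [r₁, r₂] with ϑ(s₂) − ϑ(s₁) > π; that is, the image of the unit tangent on [r₁,r₂] contains an arc of length greater than π. -/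
/-!
Suppose ϑ varies by at most π on `[r₁, r₂]`, so that it takes values in `[m, m + π]` where
`m` is its minimum. Then the component of `c` along the direction `m + π/2` has derivative
`|ċ| sin (ϑ - m) ≥ 0`; as `c r₁ = c r₂` it is constant, so `sin (ϑ - m)` vanishes and ϑ takes
only the values `m` and `m + π` on `(r₁, r₂)`. By connectedness ϑ is constant there, equal to
some `θ₀`, and then the component of `c` along `θ₀` is strictly increasing, contradicting
`c r₁ = c r₂`.
-/

noncomputable section
open Real Set

lemma nsq_pos {v : ℝ × ℝ} (hv : v ≠ 0) : 0 < nsq v := by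
  have hv' : v.1 ≠ 0 ∨ v.2 ≠ 0 := by
    contrapose! hv
    exact Prod.ext hv.1 hv.2
  rcases hv' with h | h
  · exact add_pos_of_pos_of_nonneg (mul_self_pos.2 h) (mul_self_nonneg _)
  · exact add_pos_of_nonneg_of_pos (mul_self_nonneg _) (mul_self_pos.2 h)

lemma enorm2_pos {v : ℝ × ℝ} (hv : v ≠ 0) : 0 < enorm2 v :=
  Real.sqrt_pos.2 (nsq_pos hv)

lemma eq_enorm2_smul_of_inv_smul_eq {v : ℝ × ℝ} {θ : ℝ} (hv : v ≠ 0)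
    (h : (enorm2 v)⁻¹ • v = (cos θ, sin θ)) : v = enorm2 v • (cos θ, sin θ) := by
  rw [← h, smul_inv_smul₀ (enorm2_pos hv).ne']

lemma dot2_smul_cos_sin (r θ α : ℝ) :
    dot2 (r • (cos θ, sin θ)) (cos α, sin α) = r * cos (θ - α) := by
  simp only [dot2, Prod.smul_mk, smul_eq_mul, cos_sub]
  ring

lemma HasDerivAt.dot2_const {c : ℝ → ℝ × ℝ} {c' : ℝ × ℝ} {s : ℝ} (hc : HasDerivAt c c' s)
    (u : ℝ × ℝ) : HasDerivAt (fun t => dot2 (c t) u) (dot2 c' u) s := by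
  have h₁ : HasDerivAt (fun t => (c t).1) c'.1 s :=
    (hasFDerivAt_fst (p := c s)).comp_hasDerivAt s hc
  have h₂ : HasDerivAt (fun t => (c t).2) c'.2 s :=
    (hasFDerivAt_snd (p := c s)).comp_hasDerivAt s hc
  exact (h₁.mul_const u.1).add (h₂.mul_const u.2)

lemma eq_zero_of_hasDerivAt_nonneg_of_eq {f f' : ℝ → ℝ} {a b : ℝ}
    (hf : ∀ x, HasDerivAt f (f' x) x) (hf' : ∀ x ∈ Ioo a b, 0 ≤ f' x) (hab : f a = f b) :
    ∀ x ∈ Ioo a b, f' x = 0 := by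
  intro x hx
  have hle : a ≤ b := hx.1.le.trans hx.2.le
  have hmono : MonotoneOn f (Icc a b) :=
    monotoneOn_of_hasDerivWithinAt_nonneg (convex_Icc a b)
      (fun y _ => (hf y).continuousAt.continuousWithinAt) (fun y _ => (hf y).hasDerivWithinAt)
      (by rwa [interior_Icc])
  have hconst : ∀ y ∈ Icc a b, f y = f a := fun y hy =>
    le_antisymm (hab ▸ hmono hy (right_mem_Icc.2 hle) hy.2) (hmono (left_mem_Icc.2 hle) hy hy.1)
  have hev : f =ᶠ[nhds x] fun _ => f a :=
    Filter.eventually_of_mem (Ioo_mem_nhds hx.1 hx.2) fun y hy => hconst y (Ioo_subset_Icc_self hy)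
  exact (hf x).unique ((hasDerivAt_const x (f a)).congr_of_eventuallyEq hev)

lemma lt_of_hasDerivAt_pos {f f' : ℝ → ℝ} {a b : ℝ} (hf : ∀ x, HasDerivAt f (f' x) x)
    (hf' : ∀ x ∈ Ioo a b, 0 < f' x) (hab : a < b) : f a < f b :=
  strictMonoOn_of_hasDerivWithinAt_pos (convex_Icc a b)
    (fun y _ => (hf y).continuousAt.continuousWithinAt) (fun y _ => (hf y).hasDerivWithinAt)
    (by rwa [interior_Icc]) (left_mem_Icc.2 hab.le) (right_mem_Icc.2 hab.le) hab

def IsTangentAngle (c : ℝ → ℝ × ℝ) (ϑ : ℝ → ℝ) : Prop :=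
  ∀ s, (enorm2 (deriv c s))⁻¹ • deriv c s = ((cos (ϑ s), sin (ϑ s)) : ℝ × ℝ)

namespace IsTangentAngle

variable {c : ℝ → ℝ × ℝ} {ϑ : ℝ → ℝ}

lemma hasDerivAt_dot2 (hϑ : IsTangentAngle c ϑ) (hc : Differentiable ℝ c)
    (himm : ∀ s, deriv c s ≠ 0) (α s : ℝ) :
    HasDerivAt (fun t => dot2 (c t) (cos α, sin α)) (enorm2 (deriv c s) * cos (ϑ s - α)) s := by
  have h := (hc s).hasDerivAt.dot2_const (cos α, sin α)
  rwa [eq_enorm2_smul_of_inv_smul_eq (himm s) (hϑ s), dot2_smul_cos_sin] at h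

lemma mapsTo_pair_of_mapsTo_Icc (hϑ : IsTangentAngle c ϑ) (hc : Differentiable ℝ c)
    (himm : ∀ s, deriv c s ≠ 0) {r₁ r₂ m : ℝ} (hself : c r₁ = c r₂)
    (hrange : MapsTo ϑ (Ioo r₁ r₂) (Icc m (m + π))) : MapsTo ϑ (Ioo r₁ r₂) {m, m + π} := by
  have hderiv : ∀ s, HasDerivAt (fun t => dot2 (c t) (cos (m + π / 2), sin (m + π / 2)))
      (enorm2 (deriv c s) * sin (ϑ s - m)) s := fun s => by
    simpa only [sub_add_eq_sub_sub, cos_sub_pi_div_two] using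
      hϑ.hasDerivAt_dot2 hc himm (m + π / 2) s
  have hsin_nonneg : ∀ s ∈ Ioo r₁ r₂, 0 ≤ sin (ϑ s - m) := fun s hs =>
    sin_nonneg_of_nonneg_of_le_pi (by linarith [(hrange hs).1]) (by linarith [(hrange hs).2])
  intro s hs
  have hzero := eq_zero_of_hasDerivAt_nonneg_of_eq hderiv
    (fun s hs => mul_nonneg (enorm2_pos (himm s)).le (hsin_nonneg s hs)) (by simp only [hself]) s hs
  have hsin : sin (ϑ s - m) = 0 := (mul_eq_zero.1 hzero).resolve_left (enorm2_pos (himm s)).ne'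
  rcases (hrange hs).2.eq_or_lt with htop | htop
  · exact Or.inr htop
  · left
    have := (sin_eq_zero_iff_of_lt_of_lt (by linarith [pi_pos, (hrange hs).1]) (by linarith)).1 hsin
    linarith

lemma ne_of_mapsTo_Ioo (hϑ : IsTangentAngle c ϑ) (hc : Differentiable ℝ c)
    (himm : ∀ s, deriv c s ≠ 0) {r₁ r₂ α : ℝ} (hr : r₁ < r₂)
    (hrange : MapsTo ϑ (Ioo r₁ r₂) (Ioo (α - π / 2) (α + π / 2))) : c r₁ ≠ c r₂ := by
  intro hself
  have hcos : ∀ s ∈ Ioo r₁ r₂, 0 < cos (ϑ s - α) := fun s hs =>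
    cos_pos_of_mem_Ioo ⟨by linarith [(hrange hs).1], by linarith [(hrange hs).2]⟩
  have hlt := lt_of_hasDerivAt_pos (hϑ.hasDerivAt_dot2 hc himm α)
    (fun s hs => mul_pos (enorm2_pos (himm s)) (hcos s hs)) hr
  simp only [hself, lt_irrefl] at hlt

end IsTangentAngle

/-- A self-intersecting C¹ immersed planar curve has a unit
tangent sweeping an arc of length > π between the self-intersection parameters. -/
theorem tangent_arc_of_self_intersection
    (c : ℝ → ℝ × ℝ) (hc : ContDiff ℝ 1 c) (himm : ∀ s : ℝ, deriv c s ≠ 0)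
    (r₁ r₂ : ℝ) (hr : r₁ < r₂) (hself : c r₁ = c r₂)
    (ϑ : ℝ → ℝ) (hϑcont : Continuous ϑ)
    (hlift : ∀ s : ℝ, (enorm2 (deriv c s))⁻¹ • deriv c s =
      ((Real.cos (ϑ s), Real.sin (ϑ s)) : ℝ × ℝ)) :
    ∃ s₁ ∈ Set.Icc r₁ r₂, ∃ s₂ ∈ Set.Icc r₁ r₂, ϑ s₂ - ϑ s₁ > π := by
  by_contra! hsmall
  have hϑ : IsTangentAngle c ϑ := hlift
  have hdiff : Differentiable ℝ c := hc.differentiable one_ne_zero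
  obtain ⟨smin, hsmin, hmin⟩ :=
    isCompact_Icc.exists_isMinOn (nonempty_Icc.2 hr.le) hϑcont.continuousOn
  have hrange : MapsTo ϑ (Ioo r₁ r₂) (Icc (ϑ smin) (ϑ smin + π)) := fun s hs =>
    ⟨hmin (Ioo_subset_Icc_self hs), by linarith [hsmall smin hsmin s (Ioo_subset_Icc_self hs)]⟩
  obtain ⟨s₀, hs₀⟩ := nonempty_Ioo.2 hr
  have hconst : ∀ s ∈ Ioo r₁ r₂, ϑ s = ϑ s₀ := fun s hs =>
    isPreconnected_Ioo.constant_of_mapsTo (toFinite _).isDiscrete hϑcont.continuousOn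
      (hϑ.mapsTo_pair_of_mapsTo_Icc hdiff himm hself hrange) hs hs₀
  refine hϑ.ne_of_mapsTo_Ioo hdiff himm (α := ϑ s₀) hr (fun s hs => ?_) hself
  rw [mem_Ioo, hconst s hs]
  constructor <;> linarith [pi_pos]
end
end

section
/- Let γ: ℝ² → ℝ² be the evolution by isothermal gauge of C¹ × C⁰ initial data (c,v), with ϑ, μ, α_±, β as defined. Suppose there exist s₁, s₂ ∈ ℝ with ϑ(s₂) − ϑ(s₁) > π. Then: (i) there exists (s₀,t₀) ∈ ℝ² with β(s₀,t₀) ∉ [0, 2π]; and (ii) if in addition c is proper (|c(s)| → ∞ as s → ±∞), then there exists a time t* ∈ ℝ such that sin(β(·,t*)/2) takes both positive and negative values, i.e. there exist p, q ∈ ℝ with sin(β(p,t*)/2) > 0 and sin(β(q,t*)/2) < 0. -/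
noncomputable section
open Real Set Filter MeasureTheory
open scoped ContDiff ENNReal

/-- The lift α₊ = ϑ + arcsin μ of a₊. -/
def alphaP (ϑ μ : ℝ → ℝ) (s : ℝ) : ℝ := ϑ s + Real.arcsin (μ s)
/-- The lift α₋ = ϑ − arcsin μ − π of a₋. -/
def alphaM (ϑ μ : ℝ → ℝ) (s : ℝ) : ℝ := ϑ s - Real.arcsin (μ s) - π
/-- β(s,t) = α₊(s+t) − α₋(s−t). -/
def betaIG (ϑ μ : ℝ → ℝ) (p : ℝ × ℝ) : ℝ := alphaP ϑ μ (p.1 + p.2) - alphaM ϑ μ (p.1 - p.2)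

/-- μ is the (signed) speed of v relative to the normal direction U₀^⊥:
v = μ·(−sin ϑ, cos ϑ) with |μ| < 1. -/
def IsVelocityLift (v : ℝ → ℝ × ℝ) (ϑ μ : ℝ → ℝ) : Prop :=
  ∀ s, |μ s| < 1 ∧ v s = μ s • ((-Real.sin (ϑ s), Real.cos (ϑ s)) : ℝ × ℝ)

/-!
At the characteristic points `((s₂ + s₁)/2, ±(s₂ - s₁)/2)` the angle `β` takes the values
`α₊(s₂) - α₋(s₁)` and `α₊(s₁) - α₋(s₂)`, whose difference is `2(ϑ s₂ - ϑ s₁) > 2π`, so they cannot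
both lie in `[0, 2π]`. After shrinking the increment of `ϑ` into `(π, 2π)` with the intermediate
value theorem, one of these two values makes `sin (β/2)` negative, whereas
`sin (β(s, 0)/2) = cos (arcsin μ(s)) > 0`. If no single time carried both signs, connectedness
of `ℝ` would give a time `t` with `sin (β(·, t)/2) ≡ 0`, i.e. `a₊(s + t) = a₋(s - t)` for all `s`.
Since `∂ₛγ(s, t) = (a₊(s + t) - a₋(s - t))/2`, the curve `γ(·, t)` is then a single point, and as
`c` is 1-Lipschitz and `|v| ≤ 1`, `|c(s + t)| ≤ |γ(s, t)| + 2|t|` is bounded: `c` is not proper.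
-/

section Euclidean

lemma nsq_eq_sq_add_sq (a : ℝ × ℝ) : nsq a = a.1 ^ 2 + a.2 ^ 2 := by
  simp only [nsq, dot2]; ring

end Euclidean

section Evolution

variable {c v : ℝ → ℝ × ℝ}

lemma hasDerivAt_gammaIG_fst (hc : Differentiable ℝ c) (hv : Continuous v) (s t : ℝ) :
    HasDerivAt (fun x => gammaIG c v (x, t))
      ((1 / 2 : ℝ) • (aplus c v (s + t) - aminus c v (s - t))) s := by
  have hV : ∀ u, HasDerivAt (fun x => ∫ ζ in (0 : ℝ)..x, v ζ) (v u) u :=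
    fun u => (hv.integral_hasStrictDerivAt 0 u).hasDerivAt
  have h := ((((hc (s + t)).hasDerivAt.comp_add_const s t).add
    ((hc (s - t)).hasDerivAt.comp_sub_const s t)).add
    (((hV (s + t)).comp_add_const s t).sub ((hV (s - t)).comp_sub_const s t))).const_smul
    (1 / 2 : ℝ)
  refine (h.congr_deriv ?_).congr_of_eventuallyEq (.of_forall fun x => ?_)
  · simp only [aplus, aminus]; module
  · simp only [gammaIG, Pi.add_apply, Pi.sub_apply, Pi.smul_apply,
      intervalIntegral.integral_interval_sub_left (hv.intervalIntegrable _ _)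
        (hv.intervalIntegrable _ _)]

lemma IGData.lipschitzWith (hdata : IGData c v) : LipschitzWith 1 c := by
  refine lipschitzWith_of_nnnorm_deriv_le (hdata.hc.differentiable one_ne_zero) fun s => ?_
  rw [← NNReal.coe_le_coe, coe_nnnorm, NNReal.coe_one]
  refine norm_le_one_of_nsq_le_one ?_
  have := hdata.hnorm s
  nlinarith [nsq_eq_sq_add_sq (v s), sq_nonneg (v s).1, sq_nonneg (v s).2]

lemma IGData.norm_le_one_s15 (hdata : IGData c v) (s : ℝ) : ‖v s‖ ≤ 1 :=
  norm_le_one_of_nsq_le_one (hdata.hvlt s).le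

lemma norm_le_norm_gammaIG_add (hc : LipschitzWith 1 c) (hv : ∀ s, ‖v s‖ ≤ 1) (s t : ℝ) :
    ‖c (s + t)‖ ≤ ‖gammaIG c v (s, t)‖ + 2 * |t| := by
  have hlen : |s + t - (s - t)| = 2 * |t| := by
    rw [show s + t - (s - t) = 2 * t by ring, abs_mul, abs_two]
  have hc' : ‖c (s + t) - c (s - t)‖ ≤ 2 * |t| := by
    have := hc.norm_sub_le (s + t) (s - t)
    rwa [Real.norm_eq_abs, hlen, NNReal.coe_one, one_mul] at this
  have hv' : ‖∫ ζ in (s - t)..(s + t), v ζ‖ ≤ 2 * |t| := by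
    have := intervalIntegral.norm_integral_le_of_norm_le_const (fun ζ _ => hv ζ)
      (a := s - t) (b := s + t)
    rwa [hlen, one_mul] at this
  have hsplit : c (s + t) = gammaIG c v (s, t)
      + (1 / 2 : ℝ) • ((c (s + t) - c (s - t)) - ∫ ζ in (s - t)..(s + t), v ζ) := by
    simp only [gammaIG]; module
  calc ‖c (s + t)‖ = ‖gammaIG c v (s, t)
        + (1 / 2 : ℝ) • ((c (s + t) - c (s - t)) - ∫ ζ in (s - t)..(s + t), v ζ)‖ :=
        congrArg _ hsplit
    _ ≤ ‖gammaIG c v (s, t)‖ + 1 / 2 * (‖c (s + t) - c (s - t)‖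
        + ‖∫ ζ in (s - t)..(s + t), v ζ‖) := by
        grw [norm_add_le, norm_smul, norm_sub_le]
        norm_num
    _ ≤ ‖gammaIG c v (s, t)‖ + 2 * |t| := by linarith

lemma gammaIG_eq_of_null (hc : Differentiable ℝ c) (hv : Continuous v) {t : ℝ}
    (hnull : ∀ ζ, aplus c v (ζ + t) = aminus c v (ζ - t)) (s s' : ℝ) :
    gammaIG c v (s, t) = gammaIG c v (s', t) := by
  have hderiv (x : ℝ) := hasDerivAt_gammaIG_fst hc hv x t
  refine is_const_of_deriv_eq_zero (f := fun x => gammaIG c v (x, t))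
    (fun x => (hderiv x).differentiableAt) (fun x => ?_) s s'
  rw [(hderiv x).deriv, hnull, sub_self, smul_zero]

lemma IGData.exists_enorm2_le_of_null (hdata : IGData c v) {t : ℝ}
    (hnull : ∀ ζ, aplus c v (ζ + t) = aminus c v (ζ - t)) :
    ∃ M, ∀ s, enorm2 (c s) ≤ M := by
  refine ⟨2 * (‖gammaIG c v (0, t)‖ + 2 * |t|), fun s => ?_⟩
  have hbound := norm_le_norm_gammaIG_add hdata.lipschitzWith hdata.norm_le_one_s15 (s - t) t
  rw [sub_add_cancel,
    gammaIG_eq_of_null (hdata.hc.differentiable one_ne_zero) hdata.hv hnull _ 0] at hbound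
  linarith [enorm2_le_two_mul_norm (c s)]

end Evolution

section Angles

lemma cos_arcsin_pos {x : ℝ} (hx : |x| < 1) : 0 < cos (arcsin x) :=
  cos_pos_of_mem_Ioo ⟨neg_pi_div_two_lt_arcsin.2 (abs_lt.1 hx).1,
    arcsin_lt_pi_div_two.2 (abs_lt.1 hx).2⟩

variable {c v : ℝ → ℝ × ℝ} {ϑ μ : ℝ → ℝ}

lemma IsVelocityLift.continuous (hμ : IsVelocityLift v ϑ μ) (hv : Continuous v)
    (hϑ : Continuous ϑ) : Continuous μ := by
  have h : ∀ s, μ s = dot2 (v s) (-sin (ϑ s), cos (ϑ s)) := fun s => by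
    rw [(hμ s).2]
    simp only [dot2, Prod.smul_mk, smul_eq_mul]
    linear_combination (-μ s) * sin_sq_add_cos_sq (ϑ s)
  rw [funext h]
  unfold dot2
  fun_prop

lemma IsVelocityLift.nsq_eq (hμ : IsVelocityLift v ϑ μ) (s : ℝ) : nsq (v s) = μ s ^ 2 := by
  rw [(hμ s).2, nsq_eq_sq_add_sq]
  simp only [Prod.smul_mk, smul_eq_mul]
  linear_combination μ s ^ 2 * sin_sq_add_cos_sq (ϑ s)

lemma deriv_eq_cos_arcsin_smul {s : ℝ} (hnorm : nsq (deriv c s) + nsq (v s) = 1)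
    (hlift : IsTangentLift c ϑ) (hμ : IsVelocityLift v ϑ μ) :
    deriv c s = cos (arcsin (μ s)) • (cos (ϑ s), sin (ϑ s)) := by
  have hlen : enorm2 (deriv c s) = cos (arcsin (μ s)) := by
    rw [enorm2, cos_arcsin, ← hμ.nsq_eq s, ← hnorm, add_sub_cancel_right]
  have hpos : 0 < enorm2 (deriv c s) := by
    rw [hlen]
    exact cos_arcsin_pos (hμ s).1
  rw [← hlen, ← hlift.2 s, smul_smul, mul_inv_cancel₀ hpos.ne', one_smul]

lemma aplus_eq_cos_sin {s : ℝ} (hnorm : nsq (deriv c s) + nsq (v s) = 1)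
    (hlift : IsTangentLift c ϑ) (hμ : IsVelocityLift v ϑ μ) :
    aplus c v s = (cos (alphaP ϑ μ s), sin (alphaP ϑ μ s)) := by
  have hsin : sin (arcsin (μ s)) = μ s := sin_arcsin' (abs_le.1 (hμ s).1.le)
  rw [aplus, (hμ s).2, deriv_eq_cos_arcsin_smul hnorm hlift hμ, alphaP, cos_add, sin_add, hsin]
  simp only [Prod.smul_mk, smul_eq_mul, Prod.mk_add_mk, Prod.mk.injEq]
  constructor <;> ring

lemma aminus_eq_cos_sin {s : ℝ} (hnorm : nsq (deriv c s) + nsq (v s) = 1)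
    (hlift : IsTangentLift c ϑ) (hμ : IsVelocityLift v ϑ μ) :
    aminus c v s = (cos (alphaM ϑ μ s), sin (alphaM ϑ μ s)) := by
  have hsin : sin (arcsin (μ s)) = μ s := sin_arcsin' (abs_le.1 (hμ s).1.le)
  rw [aminus, (hμ s).2, deriv_eq_cos_arcsin_smul hnorm hlift hμ, alphaM, cos_sub_pi, sin_sub_pi,
    cos_sub, sin_sub, hsin]
  simp only [Prod.smul_mk, smul_eq_mul, Prod.mk_sub_mk, Prod.mk.injEq]
  constructor <;> ring

lemma aplus_eq_aminus_of_sin_half_betaIG_eq_zero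
    (hnorm : ∀ s, nsq (deriv c s) + nsq (v s) = 1) (hlift : IsTangentLift c ϑ)
    (hμ : IsVelocityLift v ϑ μ) {s t : ℝ} (h : sin (betaIG ϑ μ (s, t) / 2) = 0) :
    aplus c v (s + t) = aminus c v (s - t) := by
  obtain ⟨n, hn⟩ := sin_eq_zero_iff.1 h
  have hα : alphaP ϑ μ (s + t) = alphaM ϑ μ (s - t) + n * (2 * π) := by
    simp only [betaIG] at hn; linarith
  rw [aplus_eq_cos_sin (hnorm _) hlift hμ, aminus_eq_cos_sin (hnorm _) hlift hμ, hα,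
    cos_add_int_mul_two_pi, sin_add_int_mul_two_pi]

end Angles

section Beta

variable {ϑ μ : ℝ → ℝ}

lemma betaIG_half_add_half_sub (u w : ℝ) :
    betaIG ϑ μ ((u + w) / 2, (u - w) / 2) = alphaP ϑ μ u - alphaM ϑ μ w := by
  simp only [betaIG]; ring_nf

lemma continuous_betaIG (hϑ : Continuous ϑ) (hμ : Continuous μ) : Continuous (betaIG ϑ μ) := by
  unfold betaIG alphaP alphaM
  fun_prop

lemma exists_betaIG_lt_zero_or_two_pi_lt {s₁ s₂ : ℝ} (h : π < ϑ s₂ - ϑ s₁) :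
    ∃ p, betaIG ϑ μ p < 0 ∨ 2 * π < betaIG ϑ μ p := by
  by_contra! hβ
  have h₂₁ := (hβ ((s₂ + s₁) / 2, (s₂ - s₁) / 2)).2
  have h₁₂ := (hβ ((s₁ + s₂) / 2, (s₁ - s₂) / 2)).1
  rw [betaIG_half_add_half_sub] at h₂₁ h₁₂
  simp only [alphaP, alphaM] at h₂₁ h₁₂
  linarith

lemma sin_half_betaIG_zero_pos {s : ℝ} (hμ : |μ s| < 1) : 0 < sin (betaIG ϑ μ (s, 0) / 2) := by
  have hβ : betaIG ϑ μ (s, 0) / 2 = arcsin (μ s) + π / 2 := by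
    simp only [betaIG, alphaP, alphaM, add_zero, sub_zero]; ring
  rw [hβ, sin_add_pi_div_two]
  exact cos_arcsin_pos hμ

lemma sin_half_neg_of_neg {x : ℝ} (h₀ : -(2 * π) < x) (h₁ : x < 0) : sin (x / 2) < 0 :=
  sin_neg_of_neg_of_neg_pi_lt (by linarith) (by linarith)

lemma sin_half_neg_of_two_pi_lt {x : ℝ} (h₀ : 2 * π < x) (h₁ : x < 4 * π) : sin (x / 2) < 0 := by
  rw [← sin_sub_two_pi]
  exact sin_neg_of_neg_of_neg_pi_lt (by linarith) (by linarith)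

lemma exists_sin_half_betaIG_neg_of_lt (hμ : ∀ s, |μ s| < 1) {s₁ s₂ : ℝ}
    (h₁ : π < ϑ s₂ - ϑ s₁) (h₂ : ϑ s₂ - ϑ s₁ < 2 * π) :
    ∃ s t, sin (betaIG ϑ μ (s, t) / 2) < 0 := by
  have hlo (s : ℝ) : -(π / 2) < arcsin (μ s) := neg_pi_div_two_lt_arcsin.2 (abs_lt.1 (hμ s)).1
  have hhi (s : ℝ) : arcsin (μ s) < π / 2 := arcsin_lt_pi_div_two.2 (abs_lt.1 (hμ s)).2
  have := hlo s₁; have := hlo s₂; have := hhi s₁; have := hhi s₂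
  by_cases hcase : π < ϑ s₂ - ϑ s₁ + arcsin (μ s₂) + arcsin (μ s₁)
  · refine ⟨(s₂ + s₁) / 2, (s₂ - s₁) / 2, ?_⟩
    rw [betaIG_half_add_half_sub, alphaP, alphaM]
    exact sin_half_neg_of_two_pi_lt (by linarith) (by linarith)
  · refine ⟨(s₁ + s₂) / 2, (s₁ - s₂) / 2, ?_⟩
    rw [betaIG_half_add_half_sub, alphaP, alphaM]
    exact sin_half_neg_of_neg (by linarith) (by linarith)

lemma exists_sin_half_betaIG_neg (hϑ : Continuous ϑ) (hμ : ∀ s, |μ s| < 1) {s₁ s₂ : ℝ}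
    (h : π < ϑ s₂ - ϑ s₁) : ∃ s t, sin (betaIG ϑ μ (s, t) / 2) < 0 := by
  have := pi_pos
  -- `ϑ s₃ - ϑ s₁ = min (ϑ s₂ - ϑ s₁) (3π/2) ∈ (π, 2π)`
  have hmem : min (ϑ s₂) (ϑ s₁ + 3 * π / 2) ∈ uIcc (ϑ s₁) (ϑ s₂) :=
    mem_uIcc.2 (Or.inl ⟨by simp only [le_min_iff]; constructor <;> linarith, min_le_left _ _⟩)
  obtain ⟨s₃, -, hs₃⟩ := intermediate_value_uIcc hϑ.continuousOn hmem
  refine exists_sin_half_betaIG_neg_of_lt hμ (s₁ := s₁) (s₂ := s₃) ?_ ?_ <;>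
    rw [hs₃]
  · rw [lt_sub_iff_add_lt', lt_min_iff]; constructor <;> linarith
  · linarith [min_le_right (ϑ s₂) (ϑ s₁ + 3 * π / 2)]

end Beta

lemma exists_pos_neg_or_exists_forall_eq_zero {X Y : Type*} [TopologicalSpace Y]
    [PreconnectedSpace Y] {F : X → Y → ℝ} (hF : ∀ x, Continuous (F x)) {x₀ x₁ : X} {t₀ t₁ : Y}
    (h₀ : 0 < F x₀ t₀) (h₁ : F x₁ t₁ < 0) :
    (∃ t p q, 0 < F p t ∧ F q t < 0) ∨ ∃ t, ∀ x, F x t = 0 := by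
  by_contra! ⟨hsign, hzero⟩
  have hnonneg : IsClosed {t | ∀ x, 0 ≤ F x t} := by
    simp only [ofPred_forall]; exact isClosed_iInter fun x => isClosed_le continuous_const (hF x)
  have hnonpos : IsClosed {t | ∀ x, F x t ≤ 0} := by
    simp only [ofPred_forall]; exact isClosed_iInter fun x => isClosed_le (hF x) continuous_const
  have hcover : univ ⊆ {t | ∀ x, 0 ≤ F x t} ∪ {t | ∀ x, F x t ≤ 0} := fun t _ => by
    by_cases hpos : ∃ p, 0 < F p t
    · obtain ⟨p, hp⟩ := hpos
      exact Or.inl fun x => hsign t p x hp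
    · exact Or.inr fun x => not_lt.1 fun hx => hpos ⟨x, hx⟩
  obtain ⟨t, -, htpos, htneg⟩ := isPreconnected_closed_iff.1 isPreconnected_univ _ _
    hnonneg hnonpos hcover ⟨t₀, trivial, fun x => hsign t₀ x₀ x h₀⟩
    ⟨t₁, trivial, fun x => not_lt.1 fun hx => (hsign t₁ x x₁ hx).not_gt h₁⟩
  obtain ⟨x, hx⟩ := hzero t
  exact hx (le_antisymm (htneg x) (htpos x))

/-- If the tangent angle ϑ increases by more than π then β leaves
[0,2π] somewhere; if in addition c is proper, then at some time t* the function
sin(β(·,t*)/2) takes both positive and negative values. -/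
theorem beta_sign_change
    (c v : ℝ → ℝ × ℝ) (hdata : IGData c v)
    (ϑ μ : ℝ → ℝ) (hlift : IsTangentLift c ϑ) (hμ : IsVelocityLift v ϑ μ)
    (s₁ s₂ : ℝ) (harc : ϑ s₂ - ϑ s₁ > π) :
    (∃ p : ℝ × ℝ, betaIG ϑ μ p < 0 ∨ 2 * π < betaIG ϑ μ p) ∧
    ((Tendsto (fun s => enorm2 (c s)) atTop atTop ∧
        Tendsto (fun s => enorm2 (c s)) atBot atTop) →
      ∃ tstar p q : ℝ,
        0 < Real.sin (betaIG ϑ μ (p, tstar) / 2) ∧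
        Real.sin (betaIG ϑ μ (q, tstar) / 2) < 0) := by
  refine ⟨exists_betaIG_lt_zero_or_two_pi_lt harc, fun hproper => ?_⟩
  have hβ := continuous_betaIG hlift.1 (hμ.continuous hdata.hv hlift.1)
  obtain ⟨s₀, t₀, hneg⟩ := exists_sin_half_betaIG_neg hlift.1 (fun s => (hμ s).1) harc
  rcases exists_pos_neg_or_exists_forall_eq_zero (F := fun s t => sin (betaIG ϑ μ (s, t) / 2))
    (fun s => by fun_prop) (sin_half_betaIG_zero_pos (hμ 0).1) hneg with hmixed | ⟨t, hnull⟩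
  · exact hmixed
  obtain ⟨M, hM⟩ := hdata.exists_enorm2_le_of_null fun ζ =>
    aplus_eq_aminus_of_sin_half_betaIG_eq_zero hdata.hnorm hlift hμ (hnull ζ)
  obtain ⟨s, hs⟩ := (hproper.1.eventually_gt_atTop M).exists
  exact ((hM s).not_gt hs).elim
end
end

section
/- Mixed-norm curvature blow-up rate for the shrinking circle: the surface φ(s,t) = (t, cos t cos s, cos t sin s), (s,t) ∈ ℝ × (−π/2, π/2), is a timelike immersion with vanishing mean curvature whose cross-sections γ(·,t) are circles of curvature |k(s,t)| = 1/cos t, with arclength element dσ = cos t ds. For all p, q ∈ (1, ∞), the mixed norm ‖k‖_{L^q((0,π/2); L^p(dσ))} = ( ∫₀^{π/2} ( ∫₀^{2π} (1/cos t)^p · cos t ds )^{q/p} dt )^{1/q} equals (2π)^{1/p} ( ∫₀^{π/2} (cos t)^{q(1−p)/p} dt )^{1/q}, and this is finite if and only if 1/p + 1/q > 1. -/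
noncomputable section
open Real Set Filter MeasureTheory
open scoped ENNReal ContDiff

/-- 2×2 determinant of a pair of plane vectors. -/
def det2 (a b : ℝ × ℝ) : ℝ := a.1 * b.2 - a.2 * b.1

def pdss (γ : ℝ × ℝ → ℝ × ℝ) (p : ℝ × ℝ) : ℝ × ℝ := deriv (fun x => pds γ (x, p.2)) p.1
def pdtt (γ : ℝ × ℝ → ℝ × ℝ) (p : ℝ × ℝ) : ℝ × ℝ := deriv (fun y => pdt γ (p.1, y)) p.2

/-- The shrinking circle: γ(s,t) = (cos t cos s, cos t sin s). -/
def circGamma (p : ℝ × ℝ) : ℝ × ℝ :=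
  (Real.cos p.2 * Real.cos p.1, Real.cos p.2 * Real.sin p.1)

/-- Signed curvature of the cross-section γ(·,t). -/
def circK (s t : ℝ) : ℝ :=
  det2 (pds circGamma (s, t)) (pdss circGamma (s, t)) /
    (enorm2 (pds circGamma (s, t))) ^ 3

/-!
Everything about the immersion is explicit: `γ_s = cos t (-sin s, cos s)`,
`γ_t = -sin t (cos s, sin s)` and `γ_ss = γ_tt = -γ`, so the geometric claims are
trigonometric identities and the curvature is `cos² t / |cos t|³ = 1 / |cos t|`.
For the mixed norm the inner integrand `(1 / cos t)^p cos t = cos^(1-p) t` does not depend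
on `s`, which factors out `(2π)^(1/p)` and leaves `∫₀^{π/2} cos^a t dt` with
`a = q (1 - p) / p ≤ 0`. Reflecting `t ↦ π/2 - t` turns `cos` into `sin`, and Jordan's
inequality `2x/π ≤ sin x ≤ x` compares this with `∫₀^{π/2} x^a dx`, which is finite iff
`-1 < a`, i.e. iff `1 < 1/p + 1/q`.
-/

lemma pds_circGamma (s t : ℝ) :
    pds circGamma (s, t) = (cos t * -sin s, cos t * cos s) :=
  (((hasDerivAt_cos s).const_mul (cos t)).prodMk ((hasDerivAt_sin s).const_mul (cos t))).deriv

lemma pdt_circGamma (s t : ℝ) :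
    pdt circGamma (s, t) = (-sin t * cos s, -sin t * sin s) :=
  (((hasDerivAt_cos t).mul_const (cos s)).prodMk ((hasDerivAt_cos t).mul_const (sin s))).deriv

lemma pdss_circGamma (s t : ℝ) :
    pdss circGamma (s, t) = (cos t * -cos s, cos t * -sin s) := by
  simp only [pdss, pds_circGamma]
  exact (((hasDerivAt_sin s).neg.const_mul (cos t)).prodMk
    ((hasDerivAt_cos s).const_mul (cos t))).deriv

lemma pdtt_circGamma (s t : ℝ) :
    pdtt circGamma (s, t) = (-cos t * cos s, -cos t * sin s) := by
  simp only [pdtt, pdt_circGamma]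
  exact (((hasDerivAt_sin t).neg.mul_const (cos s)).prodMk
    ((hasDerivAt_sin t).neg.mul_const (sin s))).deriv

lemma pdtt_circGamma_eq_pdss (s t : ℝ) : pdtt circGamma (s, t) = pdss circGamma (s, t) := by
  rw [pdtt_circGamma, pdss_circGamma]
  ext <;> ring

lemma dot2_pds_pdt_circGamma (s t : ℝ) :
    dot2 (pds circGamma (s, t)) (pdt circGamma (s, t)) = 0 := by
  simp only [dot2, pds_circGamma, pdt_circGamma]
  ring

lemma nsq_pds_circGamma (s t : ℝ) : nsq (pds circGamma (s, t)) = cos t ^ 2 := by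
  simp only [nsq, dot2, pds_circGamma]
  linear_combination cos t ^ 2 * sin_sq_add_cos_sq s

lemma nsq_pdt_circGamma (s t : ℝ) : nsq (pdt circGamma (s, t)) = sin t ^ 2 := by
  simp only [nsq, dot2, pdt_circGamma]
  linear_combination sin t ^ 2 * cos_sq_add_sin_sq s

lemma enorm2_pds_circGamma (s t : ℝ) : enorm2 (pds circGamma (s, t)) = |cos t| := by
  rw [enorm2, nsq_pds_circGamma, sqrt_sq_eq_abs]

lemma det2_pds_pdss_circGamma (s t : ℝ) :
    det2 (pds circGamma (s, t)) (pdss circGamma (s, t)) = cos t ^ 2 := by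
  simp only [det2, pds_circGamma, pdss_circGamma]
  linear_combination cos t ^ 2 * sin_sq_add_cos_sq s

lemma pds_circGamma_ne_zero {s t : ℝ} (ht : cos t ≠ 0) : pds circGamma (s, t) ≠ 0 := by
  intro h
  have hnsq := nsq_pds_circGamma s t
  simp only [h, nsq, dot2, Prod.fst_zero, Prod.snd_zero, mul_zero, add_zero] at hnsq
  exact ht (pow_eq_zero_iff two_ne_zero |>.mp hnsq.symm)

lemma circK_eq (s t : ℝ) : circK s t = 1 / |cos t| := by
  rw [circK, det2_pds_pdss_circGamma, enorm2_pds_circGamma, ← sq_abs]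
  rcases eq_or_ne |cos t| 0 with h | h
  · simp [h]
  · field_simp

lemma integrableOn_Ioo_comp_sub_left_iff {E : Type*} [NormedAddCommGroup E] {f : ℝ → E}
    {c : ℝ} (hc : 0 ≤ c) :
    IntegrableOn (fun t => f (c - t)) (Ioo 0 c) ↔ IntegrableOn f (Ioo 0 c) := by
  rw [← intervalIntegrable_iff_integrableOn_Ioo_of_le (f := f) hc,
    ← intervalIntegrable_iff_integrableOn_Ioo_of_le (f := fun t => f (c - t)) hc]
  simpa [IntervalIntegrable.symm_iff (a := c)] using
    IntervalIntegrable.comp_sub_left_iff (f := f) (a := 0) (b := c) c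

lemma integrableOn_sin_rpow_iff {a : ℝ} (ha : a ≤ 0) :
    IntegrableOn (fun x => sin x ^ a) (Ioo 0 (π / 2)) ↔ -1 < a := by
  rw [← intervalIntegral.integrableOn_Ioo_rpow_iff (half_pos pi_pos)]
  have hsin : ∀ x ∈ Ioo 0 (π / 2), 0 < sin x := fun x hx =>
    sin_pos_of_pos_of_lt_pi hx.1 (by linarith [hx.2, pi_pos])
  constructor
  · intro h
    refine h.mono' (measurable_id.pow_const a).aestronglyMeasurable ?_
    filter_upwards [ae_restrict_mem measurableSet_Ioo] with x hx
    rw [norm_of_nonneg (rpow_nonneg hx.1.le a)]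
    exact rpow_le_rpow_of_nonpos (hsin x hx) (sin_le hx.1.le) ha
  · intro h
    refine (h.const_mul ((2 / π) ^ a)).mono'
      (measurable_sin.pow_const a).aestronglyMeasurable ?_
    filter_upwards [ae_restrict_mem measurableSet_Ioo] with x hx
    rw [norm_of_nonneg (rpow_nonneg (hsin x hx).le a), ← mul_rpow (by positivity) hx.1.le]
    exact rpow_le_rpow_of_nonpos (by have := hx.1; positivity) (mul_le_sin hx.1.le hx.2.le) ha

lemma integrableOn_cos_rpow_iff {a : ℝ} (ha : a ≤ 0) :
    IntegrableOn (fun t => cos t ^ a) (Ioo 0 (π / 2)) ↔ -1 < a := by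
  rw [← integrableOn_sin_rpow_iff ha,
    ← integrableOn_Ioo_comp_sub_left_iff (f := fun x => sin x ^ a) (half_pos pi_pos).le]
  simp only [sin_pi_div_two_sub]

lemma lintegral_cos_rpow_lt_top_iff {a : ℝ} (ha : a ≤ 0) :
    ∫⁻ t in Ioo 0 (π / 2), ENNReal.ofReal (cos t ^ a) < ⊤ ↔ -1 < a := by
  have hnonneg : 0 ≤ᵐ[volume.restrict (Ioo 0 (π / 2))] fun t => cos t ^ a := by
    filter_upwards [ae_restrict_mem measurableSet_Ioo] with t ht
    exact rpow_nonneg (cos_nonneg_of_mem_Icc ⟨by linarith [ht.1, pi_pos], ht.2.le⟩) a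
  rw [← integrableOn_cos_rpow_iff ha, IntegrableOn,
    ← lintegral_ofReal_ne_top_iff_integrable (measurable_cos.pow_const a).aestronglyMeasurable
      hnonneg, lt_top_iff_ne_top]

lemma one_div_rpow_mul_self {c : ℝ} (hc : 0 < c) (p : ℝ) : (1 / c) ^ p * c = c ^ (1 - p) := by
  rw [rpow_sub hc, rpow_one, one_div, inv_rpow hc.le, inv_mul_eq_div]

lemma lintegral_curvature_rpow_arclength {p t : ℝ} (ht : 0 < cos t) :
    ∫⁻ _ in Ioo 0 (2 * π), ENNReal.ofReal ((1 / cos t) ^ p * cos t) =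
      ENNReal.ofReal (2 * π) * ENNReal.ofReal (cos t ^ (1 - p)) := by
  rw [setLIntegral_const, one_div_rpow_mul_self ht, volume_Ioo, sub_zero, mul_comm]

lemma circle_mixed_norm_eq {p q : ℝ} (hp : 0 < p) (hq : 0 < q) :
    (∫⁻ t in Ioo 0 (π / 2),
        (∫⁻ _ in Ioo 0 (2 * π), ENNReal.ofReal ((1 / cos t) ^ p * cos t)) ^ (q / p)) ^
        (1 / q) =
      ENNReal.ofReal (2 * π) ^ (1 / p) *
        (∫⁻ t in Ioo 0 (π / 2), ENNReal.ofReal (cos t ^ (q * (1 - p) / p))) ^ (1 / q) := by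
  have hqp : 0 ≤ q / p := by positivity
  have hinner : ∀ t ∈ Ioo 0 (π / 2),
      (∫⁻ _ in Ioo 0 (2 * π), ENNReal.ofReal ((1 / cos t) ^ p * cos t)) ^ (q / p) =
        ENNReal.ofReal (2 * π) ^ (q / p) * ENNReal.ofReal (cos t ^ (q * (1 - p) / p)) := by
    intro t ht
    have hc : 0 < cos t := cos_pos_of_mem_Ioo ⟨by linarith [ht.1, pi_pos], ht.2⟩
    rw [lintegral_curvature_rpow_arclength hc, ENNReal.mul_rpow_of_nonneg _ _ hqp,
      ENNReal.ofReal_rpow_of_pos (rpow_pos_of_pos hc _), ← rpow_mul hc.le]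
    ring_nf
  rw [setLIntegral_congr_fun measurableSet_Ioo hinner,
    lintegral_const_mul' _ _ (ENNReal.rpow_ne_top_of_nonneg hqp ENNReal.ofReal_ne_top),
    ENNReal.mul_rpow_of_nonneg _ _ (by positivity), ← ENNReal.rpow_mul]
  congr 2
  field_simp

lemma circle_mixed_norm_lt_top_iff {p q : ℝ} (hp : 1 ≤ p) (hq : 0 < q) :
    ENNReal.ofReal (2 * π) ^ (1 / p) *
        (∫⁻ t in Ioo 0 (π / 2), ENNReal.ofReal (cos t ^ (q * (1 - p) / p))) ^ (1 / q) < ⊤ ↔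
      1 < 1 / p + 1 / q := by
  have hp0 : 0 < p := by linarith
  have hconst_ne_zero : ENNReal.ofReal (2 * π) ^ (1 / p) ≠ 0 :=
    (ENNReal.rpow_pos (ENNReal.ofReal_pos.mpr (by positivity)) ENNReal.ofReal_ne_top).ne'
  have hexp : q * (1 - p) / p ≤ 0 :=
    div_nonpos_of_nonpos_of_nonneg (mul_nonpos_of_nonneg_of_nonpos hq.le (by linarith)) hp0.le
  have hconst_lt_top : ENNReal.ofReal (2 * π) ^ (1 / p) < ⊤ :=
    ENNReal.rpow_lt_top_of_nonneg (by positivity) ENNReal.ofReal_ne_top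
  set I := ∫⁻ t in Ioo 0 (π / 2), ENNReal.ofReal (cos t ^ (q * (1 - p) / p))
  calc ENNReal.ofReal (2 * π) ^ (1 / p) * I ^ (1 / q) < ⊤ ↔ I ^ (1 / q) < ⊤ :=
        ⟨fun h => ENNReal.lt_top_of_mul_ne_top_right h.ne hconst_ne_zero,
          ENNReal.mul_lt_top hconst_lt_top⟩
    _ ↔ I < ⊤ := ENNReal.rpow_lt_top_iff_of_pos (one_div_pos.mpr hq)
    _ ↔ -1 < q * (1 - p) / p := lintegral_cos_rpow_lt_top_iff hexp
    _ ↔ 1 < 1 / p + 1 / q := by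
      rw [lt_div_iff₀ hp0, div_add_div _ _ hp0.ne' hq.ne', one_lt_div (by positivity)]
      constructor <;> intro h <;> linarith

/-- The shrinking circle φ(s,t) = (t, cos t cos s, cos t sin s)
is a timelike maximal immersion on ℝ × (−π/2, π/2) whose cross-sections have
curvature 1/cos t and arclength element cos t ds, and its mixed L^q L^p curvature
norm is finite iff 1/p + 1/q > 1. -/
theorem shrinking_circle_curvature_mixed_norm :
    (∀ s : ℝ, ∀ t ∈ Set.Ioo (-(π / 2)) (π / 2),
      dot2 (pds circGamma (s, t)) (pdt circGamma (s, t)) = 0 ∧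
      nsq (pds circGamma (s, t)) + nsq (pdt circGamma (s, t)) = 1 ∧
      pdtt circGamma (s, t) = pdss circGamma (s, t) ∧
      pds circGamma (s, t) ≠ 0 ∧
      nsq (pds circGamma (s, t)) * (nsq (pdt circGamma (s, t)) - 1) -
        (dot2 (pds circGamma (s, t)) (pdt circGamma (s, t))) ^ 2 < 0) ∧
    (∀ s : ℝ, ∀ t ∈ Set.Ioo (0 : ℝ) (π / 2),
      |circK s t| = 1 / Real.cos t ∧ enorm2 (pds circGamma (s, t)) = Real.cos t) ∧
    (∀ p q : ℝ, 1 < p → 1 < q →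
      ((∫⁻ t in Set.Ioo (0 : ℝ) (π / 2),
          (∫⁻ s in Set.Ioo (0 : ℝ) (2 * π),
            ENNReal.ofReal ((1 / Real.cos t) ^ p * Real.cos t)) ^ (q / p)) ^ (1 / q) =
        (ENNReal.ofReal (2 * π)) ^ (1 / p) *
          (∫⁻ t in Set.Ioo (0 : ℝ) (π / 2),
            ENNReal.ofReal ((Real.cos t) ^ (q * (1 - p) / p))) ^ (1 / q)) ∧
      ((∫⁻ t in Set.Ioo (0 : ℝ) (π / 2),
          (∫⁻ s in Set.Ioo (0 : ℝ) (2 * π),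
            ENNReal.ofReal ((1 / Real.cos t) ^ p * Real.cos t)) ^ (q / p)) ^ (1 / q) < ⊤
        ↔ 1 / p + 1 / q > 1)) := by
  refine ⟨fun s t ht => ?_, fun s t ht => ?_, fun p q hp hq => ?_⟩
  · have hcos : cos t ≠ 0 := (cos_pos_of_mem_Ioo ht).ne'
    refine ⟨dot2_pds_pdt_circGamma s t, ?_, pdtt_circGamma_eq_pdss s t,
      pds_circGamma_ne_zero hcos, ?_⟩
    · rw [nsq_pds_circGamma, nsq_pdt_circGamma, cos_sq_add_sin_sq]
    · rw [nsq_pds_circGamma, nsq_pdt_circGamma, dot2_pds_pdt_circGamma, ← cos_sq_add_sin_sq t]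
      have : 0 < cos t ^ 4 := by positivity
      linarith
  · have hcos : 0 < cos t := cos_pos_of_mem_Ioo ⟨by linarith [ht.1, pi_pos], ht.2⟩
    rw [circK_eq, enorm2_pds_circGamma, abs_of_pos hcos, abs_of_pos (one_div_pos.mpr hcos)]
    exact ⟨rfl, rfl⟩
  · have hmixed := circle_mixed_norm_eq (by linarith : 0 < p) (by linarith : 0 < q)
    exact ⟨hmixed, hmixed ▸ circle_mixed_norm_lt_top_iff hp.le (by linarith)⟩
end
end
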